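/- arXiv:2509.03023 — 3 statements merged into one kernel-verified Lean document; each statement's English description precedes it below -/
import Mathlib

section
/- Let (X,c_i,c_j) be a digital picture with {i,j} = {1,2}. If X is nonempty, c_i-connected, and has no hole, then (X,c_i) is i-contractible. -/
/-- Points of the digital plane. -/
abbrev Pt : Type := ℤ × ℤ

/-- `c_i`-adjacency on `ℤ²` (for `i = 1` or `i = 2`). -/
def cAdj (i : ℕ) (x y : Pt) : Prop :=
  if i = 1 then |x.1 - y.1| + |x.2 - y.2| ≤ 1
  else |x.1 - y.1| ≤ 1 ∧ |x.2 - y.2| ≤ 1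

/-- The adjacency induced on a subset of `ℤ²`. -/
def subAdj (i : ℕ) (X : Set Pt) (x y : X) : Prop := cAdj i x.1 y.1

/-- Digital continuity of a map between digital images. -/
def DigCont {α β : Type} (κ : α → α → Prop) (δ : β → β → Prop) (f : α → β) : Prop :=
  ∀ x y, κ x y → δ (f x) (f y)

/-- The standard (`c_1`) adjacency on `ℕ`, used for digital intervals. -/
def natAdj (s t : ℕ) : Prop := s = t ∨ s + 1 = t ∨ t + 1 = s

/-- The two normal product adjacencies on `α × ℕ`. -/
def prodAdj (i : ℕ) {α : Type} (κ : α → α → Prop) (p q : α × ℕ) : Prop :=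
  if i = 1 then (κ p.1 q.1 ∧ p.2 = q.2) ∨ (p.1 = q.1 ∧ natAdj p.2 q.2)
  else κ p.1 q.1 ∧ natAdj p.2 q.2

/-- `f` and `g` are `i`-homotopic: there is a continuous
`H : X ×_i [0,m]_ℤ → Y` with `H(·,0) = f` and `H(·,m) = g`. -/
def Homotopic (i : ℕ) {α β : Type} (κ : α → α → Prop) (δ : β → β → Prop)
    (f g : α → β) : Prop :=
  ∃ (m : ℕ) (H : α → ℕ → β),
    (∀ x, H x 0 = f x) ∧ (∀ x, H x m = g x) ∧
    (∀ x y s t, s ≤ m → t ≤ m → prodAdj i κ (x, s) (y, t) → δ (H x s) (H y t))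

/-- `i`-homotopy equivalence of digital images. -/
def HtpyEquiv (i : ℕ) {α β : Type} (κ : α → α → Prop) (δ : β → β → Prop) : Prop :=
  ∃ (f : α → β) (g : β → α),
    DigCont κ δ f ∧ DigCont δ κ g ∧
    Homotopic i κ κ (g ∘ f) id ∧ Homotopic i δ δ (f ∘ g) id

/-- Homotopy equivalence of digital pictures `(X, c_i, c_j)` and `(Y, c_i, c_j)`. -/
def PicHtpyEquiv (i j : ℕ) (X Y : Set Pt) : Prop :=
  HtpyEquiv i (subAdj i X) (subAdj i Y) ∧ HtpyEquiv j (subAdj j Xᶜ) (subAdj j Yᶜ)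

/-- Isomorphism of digital images: a continuous bijection with continuous inverse. -/
def DigIso {α β : Type} (κ : α → α → Prop) (δ : β → β → Prop) : Prop :=
  ∃ e : α ≃ β, DigCont κ δ ⇑e ∧ DigCont δ κ ⇑e.symm

/-- Isomorphism of digital pictures. -/
def PicIso (i j : ℕ) (X Y : Set Pt) : Prop :=
  DigIso (subAdj i X) (subAdj i Y) ∧ DigIso (subAdj j Xᶜ) (subAdj j Yᶜ)

/-- `x` and `y` are joined by a `c_i`-path inside `A`. -/
def ChainIn (i : ℕ) (A : Set Pt) (x y : Pt) : Prop :=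
  ∃ (n : ℕ) (c : ℕ → Pt), c 0 = x ∧ c n = y ∧ (∀ k ≤ n, c k ∈ A) ∧
    ∀ k < n, cAdj i (c k) (c (k + 1))

/-- `A` is `c_i`-connected. -/
def Conn (i : ℕ) (A : Set Pt) : Prop := ∀ x ∈ A, ∀ y ∈ A, ChainIn i A x y

/-- The `c_i`-component of `p` in `A`. -/
def compOf (i : ℕ) (A : Set Pt) (p : Pt) : Set Pt := {y | ChainIn i A p y}

/-- The digital picture `(X, c_i, c_j)` has no hole: every `c_j`-component
of the complement of `X` is infinite. -/
def NoHole (j : ℕ) (X : Set Pt) : Prop := ∀ p ∈ Xᶜ, (compOf j Xᶜ p).Infinite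

/-- The row of `X` at height `k`. -/
def rowOf (X : Set Pt) (k : ℤ) : Set Pt := X ∩ {p | p.2 = k}

/-- `r` is a row component of `(X, c_i)`: a `c_i`-component of a row of `X`. -/
def IsRowComp (i : ℕ) (X : Set Pt) (r : Set Pt) : Prop :=
  ∃ (k : ℤ) (p : Pt), p ∈ rowOf X k ∧ r = compOf i (rowOf X k) p

/-- Two subsets of `ℤ²` are `c_i`-adjacent. -/
def setAdj (i : ℕ) (A B : Set Pt) : Prop := ∃ a ∈ A, ∃ b ∈ B, cAdj i a b

/-- The edge relation of the row component graph `R(X, c_i)`: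
two distinct row components joined when they are `c_i`-adjacent. -/
def rcgAdj (i : ℕ) (X : Set Pt) (r s : Set Pt) : Prop :=
  IsRowComp i X r ∧ IsRowComp i X s ∧ r ≠ s ∧ setAdj i r s

/-- The row component graph `R(X, c_i)` is acyclic: there is no cycle of
`k ≥ 3` distinct row components with consecutive ones adjacent. -/
def RCGAcyclic (i : ℕ) (X : Set Pt) : Prop :=
  ¬ ∃ (k : ℕ) (r : ℕ → Set Pt), 3 ≤ k ∧
    (∀ t < k, IsRowComp i X (r t)) ∧
    (∀ t < k, ∀ t' < k, r t = r t' → t = t') ∧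
    (∀ t, t + 1 < k → rcgAdj i X (r t) (r (t + 1))) ∧
    rcgAdj i X (r (k - 1)) (r 0)

/-- The row component graph `R(X, c_i)` is connected. -/
def RCGConnected (i : ℕ) (X : Set Pt) : Prop :=
  ∀ r s : Set Pt, IsRowComp i X r → IsRowComp i X s →
    Relation.ReflTransGen (rcgAdj i X) r s

/-- A digital image is `i`-contractible: the identity is `i`-homotopic to a constant map. -/
def Contractible (i : ℕ) {α : Type} (κ : α → α → Prop) : Prop :=
  ∃ x₀ : α, Homotopic i κ κ id (fun _ => x₀)

/-- Row-convexity. -/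
def RowConvex (X : Set Pt) : Prop :=
  ∀ a b c k : ℤ, (a, k) ∈ X → (c, k) ∈ X → a ≤ b → b ≤ c → (b, k) ∈ X

/-- Column-convexity. -/
def ColConvex (X : Set Pt) : Prop :=
  ∀ a b c k : ℤ, (k, a) ∈ X → (k, c) ∈ X → a ≤ b → b ≤ c → (k, b) ∈ X

/-- The row-convex hull of `X`. -/
def Hr (X : Set Pt) : Set Pt := ⋂₀ {S | RowConvex S ∧ X ⊆ S}

/-- The column-convex hull of `X`. -/
def Hc (X : Set Pt) : Set Pt := ⋂₀ {S | ColConvex S ∧ X ⊆ S}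

/-- The rc-convex hull of `X`. -/
def Hrc (X : Set Pt) : Set Pt := ⋂₀ {S | (RowConvex S ∧ ColConvex S) ∧ X ⊆ S}

/-- A loop of length `m` inside `Z`: a continuous `γ : [0,m]_ℤ → Z` with `γ 0 = γ m`. -/
def LoopIn (j : ℕ) (Z : Set Pt) (m : ℕ) (γ : ℕ → Pt) : Prop :=
  γ 0 = γ m ∧ (∀ t ≤ m, γ t ∈ Z) ∧ ∀ t < m, cAdj j (γ t) (γ (t + 1))

/-- The loop `γ` is `j`-contractible in `Z`: there is a `j`-homotopy in `Z` from `γ`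
to the constant loop at `γ 0` whose every stage is a loop based at `γ 0`. -/
def LoopContractibleIn (j : ℕ) (Z : Set Pt) (m : ℕ) (γ : ℕ → Pt) : Prop :=
  ∃ (K : ℕ) (H : ℕ → ℕ → Pt),
    (∀ t, H t 0 = γ t) ∧ (∀ t, H t K = γ 0) ∧
    (∀ k ≤ K, H 0 k = γ 0 ∧ H m k = γ 0) ∧
    (∀ t ≤ m, ∀ k ≤ K, H t k ∈ Z) ∧
    (∀ s t k l, s ≤ m → t ≤ m → k ≤ K → l ≤ K →
      prodAdj j natAdj (s, k) (t, l) → cAdj j (H s k) (H t l))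

/-- The union of the infinite `c_j`-components of the complement of `X`. -/
def InfPart (j : ℕ) (X : Set Pt) : Set Pt := {p | p ∈ Xᶜ ∧ (compOf j Xᶜ p).Infinite}

/-- The outer perimeter of the digital picture `(X, c_i, c_j)`: the least length of a
non-`j`-contractible loop in the infinite component of the complement of `X`, or `1`
if no such loop exists.  (It depends only on `j` and `X`.) -/
noncomputable def outerPerim (j : ℕ) (X : Set Pt) : ℕ := by
  classical
  exact if (∃ m γ, LoopIn j (InfPart j X) m γ ∧ ¬ LoopContractibleIn j (InfPart j X) m γ)
    then sInf {m | ∃ γ, LoopIn j (InfPart j X) m γ ∧ ¬ LoopContractibleIn j (InfPart j X) m γ}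
    else 1

/-- The digital rectangle `I_{n,m} = [1,n]_ℤ × [1,m]_ℤ`. -/
def Irect (n m : ℤ) : Set Pt := Set.Icc 1 n ×ˢ Set.Icc 1 m

/-- A finite digital image is `i`-reducible when it is `i`-homotopy equivalent to a
digital image with strictly fewer points. -/
def Reducible (i : ℕ) {α : Type} (κ : α → α → Prop) : Prop :=
  ∃ (β : Type) (δ : β → β → Prop), Reflexive δ ∧ Symmetric δ ∧ Finite β ∧
    Nat.card β < Nat.card α ∧ HtpyEquiv i κ δ

/-!
Having no hole means that `Xᶜ` is `c_j`-connected. Then the row component graph of `X` is a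
tree: a cycle of row components, say with topmost member `R`, gives a closed `c_i`-walk in `X`
that crosses the vertical ray above a gap of `X` just below `R` an odd number of times, whereas
this crossing parity does not change along `c_j`-paths in `Xᶜ` and vanishes far away from `X`.

A leaf `T` of the tree (or `X` itself, if it is a single row segment) can be partly deformed
into its neighbour: either a point of `T` all of whose neighbours are adjacent to one other
point of `X` is removed, or, for `c_1`, the whole of `T` is pushed into the adjacent row. Such a
step is an `i`-homotopy equivalence that keeps `X` `c_i`-connected and `Xᶜ` `c_j`-connected, so
induction on the size of `X` contracts it to a point.
-/

/-! ### Adjacency and paths -/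

theorem cAdj_iff {i : ℕ} {x y : Pt} :
    cAdj i x y ↔ (x.1 ≤ y.1 + 1 ∧ y.1 ≤ x.1 + 1 ∧ x.2 ≤ y.2 + 1 ∧ y.2 ≤ x.2 + 1) ∧
      (i = 1 → x.1 = y.1 ∨ x.2 = y.2) := by
  unfold cAdj
  split_ifs with hi
  · simp only [hi, forall_const]
    constructor
    · intro h
      rcases abs_cases (x.1 - y.1) with ⟨h1, _⟩ | ⟨h1, _⟩ <;>
        rcases abs_cases (x.2 - y.2) with ⟨h2, _⟩ | ⟨h2, _⟩ <;> omega
    · rintro ⟨_, h | h⟩ <;> rw [h, sub_self, abs_zero] <;> [rw [zero_add]; rw [add_zero]] <;>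
        exact abs_le.mpr ⟨by omega, by omega⟩
  · simp only [hi, false_imp_iff, and_true, abs_le]
    omega

theorem cAdj_one_iff {x y : Pt} :
    cAdj 1 x y ↔ (x.1 ≤ y.1 + 1 ∧ y.1 ≤ x.1 + 1 ∧ x.2 ≤ y.2 + 1 ∧ y.2 ≤ x.2 + 1) ∧
      (x.1 = y.1 ∨ x.2 = y.2) := by
  simp [cAdj_iff]

theorem cAdj_two_iff {x y : Pt} :
    cAdj 2 x y ↔ x.1 ≤ y.1 + 1 ∧ y.1 ≤ x.1 + 1 ∧ x.2 ≤ y.2 + 1 ∧ y.2 ≤ x.2 + 1 := by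
  simp [cAdj_iff]

theorem cAdj_refl (i : ℕ) (x : Pt) : cAdj i x x := by
  rw [cAdj_iff]; omega

theorem cAdj.symm {i : ℕ} {x y : Pt} (h : cAdj i x y) : cAdj i y x := by
  rw [cAdj_iff] at *; omega

theorem cAdj.two {i : ℕ} {x y : Pt} (h : cAdj i x y) : cAdj 2 x y := by
  rw [cAdj_iff] at *; omega

def AdjIn (i : ℕ) (A : Set Pt) (u v : Pt) : Prop := u ∈ A ∧ v ∈ A ∧ cAdj i u v

instance (i : ℕ) (A : Set Pt) : Std.Symm (AdjIn i A) := ⟨fun _ _ h => ⟨h.2.1, h.1, h.2.2.symm⟩⟩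

theorem chainIn_iff {i : ℕ} {A : Set Pt} {x y : Pt} :
    ChainIn i A x y ↔ x ∈ A ∧ Relation.ReflTransGen (AdjIn i A) x y := by
  constructor
  · rintro ⟨n, c, rfl, rfl, hmem, hadj⟩
    refine ⟨hmem 0 n.zero_le, ?_⟩
    suffices ∀ k ≤ n, Relation.ReflTransGen (AdjIn i A) (c 0) (c k) from this n le_rfl
    intro k hk
    induction k with
    | zero => exact .refl
    | succ k ih =>
      exact (ih (by omega)).tail ⟨hmem k (by omega), hmem (k + 1) hk, hadj k hk⟩
  · rintro ⟨hx, h⟩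
    induction h with
    | refl => exact ⟨0, fun _ => x, rfl, rfl, fun _ _ => hx, nofun⟩
    | @tail _ z _ hbc ih =>
      obtain ⟨n, c, h0, hn, hmem, hadj⟩ := ih
      refine ⟨n + 1, fun k => if k ≤ n then c k else z, by simp [h0], by simp, ?_, ?_⟩
      · intro k hk
        dsimp only
        split_ifs with h
        exacts [hmem k h, hbc.2.1]
      · intro k hk
        by_cases hkn : k < n
        · simpa [hkn.le, Nat.succ_le_of_lt hkn] using hadj k hkn
        · have hkn : k = n := by omega
          subst hkn
          simpa [hn] using hbc.2.2

theorem ChainIn.mem_left {i : ℕ} {A : Set Pt} {x y : Pt} (h : ChainIn i A x y) : x ∈ A :=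
  (chainIn_iff.mp h).1

theorem ChainIn.mem_right {i : ℕ} {A : Set Pt} {x y : Pt} (h : ChainIn i A x y) : y ∈ A := by
  obtain ⟨hx, h⟩ := chainIn_iff.mp h
  cases h.cases_tail with
  | inl h => exact h ▸ hx
  | inr h => obtain ⟨_, _, h⟩ := h; exact h.2.1

theorem ChainIn.refl {i : ℕ} {A : Set Pt} {x : Pt} (hx : x ∈ A) : ChainIn i A x x :=
  chainIn_iff.mpr ⟨hx, .refl⟩

theorem ChainIn.single {i : ℕ} {A : Set Pt} {x y : Pt} (hx : x ∈ A) (hy : y ∈ A)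
    (h : cAdj i x y) : ChainIn i A x y :=
  chainIn_iff.mpr ⟨hx, .single ⟨hx, hy, h⟩⟩

theorem ChainIn.trans {i : ℕ} {A : Set Pt} {x y z : Pt} (h₁ : ChainIn i A x y)
    (h₂ : ChainIn i A y z) : ChainIn i A x z :=
  chainIn_iff.mpr ⟨h₁.mem_left, (chainIn_iff.mp h₁).2.trans (chainIn_iff.mp h₂).2⟩

theorem ChainIn.symm {i : ℕ} {A : Set Pt} {x y : Pt} (h : ChainIn i A x y) : ChainIn i A y x :=
  chainIn_iff.mpr ⟨h.mem_right, Std.Symm.symm _ _ (chainIn_iff.mp h).2⟩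

theorem ChainIn.mono {i : ℕ} {A B : Set Pt} (hAB : A ⊆ B) {x y : Pt} (h : ChainIn i A x y) :
    ChainIn i B x y :=
  chainIn_iff.mpr ⟨hAB h.mem_left, Relation.ReflTransGen.mono
    (fun _ _ h => ⟨hAB h.1, hAB h.2.1, h.2.2⟩) _ _ (chainIn_iff.mp h).2⟩

theorem ChainIn.map {i : ℕ} {A B : Set Pt} {f : Pt → Pt} (hf : Set.MapsTo f A B)
    (hcont : ∀ p ∈ A, ∀ q ∈ A, cAdj i p q → cAdj i (f p) (f q))
    {x y : Pt} (h : ChainIn i A x y) : ChainIn i B (f x) (f y) :=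
  chainIn_iff.mpr ⟨hf h.mem_left, Relation.ReflTransGen.lift f
    (fun _ _ h => ⟨hf h.1, hf h.2.1, hcont _ h.1 _ h.2.1 h.2.2⟩) _ _ (chainIn_iff.mp h).2⟩

theorem chainIn_horizontal_of_le {i : ℕ} {S : Set Pt} {y a b : ℤ} (hab : a ≤ b)
    (hS : ∀ x, a ≤ x → x ≤ b → (x, y) ∈ S) : ChainIn i S (a, y) (b, y) := by
  induction b, hab using Int.leInduction with
  | base => exact .refl (hS a le_rfl le_rfl)
  | succ b hab ih =>
    refine (ih fun x h₁ h₂ => hS x h₁ (by omega)).trans (.single (hS b hab (by omega))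
      (hS (b + 1) (by omega) le_rfl) ?_)
    rw [cAdj_iff]; omega

theorem chainIn_horizontal {i : ℕ} {S : Set Pt} {y a b : ℤ}
    (hS : ∀ x, min a b ≤ x → x ≤ max a b → (x, y) ∈ S) : ChainIn i S (a, y) (b, y) := by
  rcases le_total a b with h | h
  · exact chainIn_horizontal_of_le h fun x h₁ h₂ => hS x (by omega) (by omega)
  · exact (chainIn_horizontal_of_le h fun x h₁ h₂ => hS x (by omega) (by omega)).symm

theorem chainIn_vertical {i : ℕ} {S : Set Pt} {x a b : ℤ}
    (hS : ∀ y, min a b ≤ y → y ≤ max a b → (x, y) ∈ S) : ChainIn i S (x, a) (x, b) := by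
  have hswap : ∀ {p q : Pt}, cAdj i p q → cAdj i p.swap q.swap := by
    intro p q h; rw [cAdj_iff] at *; simp only [Prod.fst_swap, Prod.snd_swap]; omega
  exact (chainIn_horizontal (i := i) (S := Prod.swap ⁻¹' S) (y := x) (a := a) (b := b)
    fun y h₁ h₂ => hS y h₁ h₂).map (f := Prod.swap) (fun p hp => hp) fun p _ q _ => hswap

/-! ### The complement of a picture without holes is connected -/

theorem exists_bound {X : Set Pt} (hX : X.Finite) :
    ∃ M : ℤ, ∀ p ∈ X, -M < p.1 ∧ p.1 < M ∧ -M < p.2 ∧ p.2 < M := by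
  obtain ⟨B, hB⟩ := (hX.image fun p : Pt => |p.1| + |p.2|).bddAbove
  refine ⟨B + 1, fun p hp => ?_⟩
  have h : |p.1| + |p.2| ≤ B := hB ⟨p, hp, rfl⟩
  have := le_abs_self p.1; have := neg_abs_le p.1; have := abs_nonneg p.1
  have := le_abs_self p.2; have := neg_abs_le p.2; have := abs_nonneg p.2
  omega

def outside (M : ℤ) : Set Pt := {q | M ≤ q.1 ∨ q.1 ≤ -M ∨ M ≤ q.2 ∨ q.2 ≤ -M}

theorem chainIn_outside {j : ℕ} {M : ℤ} {q : Pt} (hq : q ∈ outside M) :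
    ChainIn j (outside M) q (M, M) := by
  obtain ⟨x, y⟩ := q
  simp only [outside, Set.mem_ofPred_eq] at hq
  have hS : ∀ p : Pt, (M ≤ p.1 ∨ p.1 ≤ -M ∨ M ≤ p.2 ∨ p.2 ≤ -M) → p ∈ outside M := fun _ h => h
  rcases hq with h | h | h | h
  all_goals first
    | exact (chainIn_vertical fun _ _ _ => hS _ (by omega)).trans
        (chainIn_horizontal fun _ _ _ => hS _ (by omega))
    | exact (chainIn_horizontal fun _ _ _ => hS _ (by omega)).trans
        (chainIn_vertical fun _ _ _ => hS _ (by omega))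

theorem conn_compl_of_noHole {j : ℕ} {X : Set Pt} (hX : X.Finite) (hnh : NoHole j X) :
    Conn j Xᶜ := by
  obtain ⟨M, hM⟩ := exists_bound hX
  have hout : outside M ⊆ Xᶜ := fun q hq hqX => by
    have := hM q hqX; simp only [outside, Set.mem_ofPred_eq] at hq; omega
  -- an infinite component is not contained in the square `(-M, M)²`
  have reach : ∀ p ∈ Xᶜ, ChainIn j Xᶜ p (M, M) := by
    intro p hp
    obtain ⟨q, hpq, hq⟩ := Set.not_subset.mp fun hsub =>
      hnh p hp (((Set.finite_Ioo (-M) M).prod (Set.finite_Ioo (-M) M)).subset hsub)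
    have hq : q ∈ outside M := by
      simp only [Set.mem_prod, Set.mem_Ioo, not_and_or, not_lt] at hq
      simp only [outside, Set.mem_ofPred_eq]; omega
    exact ChainIn.trans hpq ((chainIn_outside hq).mono hout)
  exact fun p hp q hq => (reach p hp).trans (reach q hq).symm

/-! ### Row components and the row component graph -/

def rowSeg (k a b : ℤ) : Set Pt := {q | q.2 = k ∧ a ≤ q.1 ∧ q.1 ≤ b}

theorem mem_rowSeg {k a b : ℤ} {q : Pt} : q ∈ rowSeg k a b ↔ q.2 = k ∧ a ≤ q.1 ∧ q.1 ≤ b :=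
  Iff.rfl

def rowCompOf (i : ℕ) (X : Set Pt) (x : Pt) : Set Pt := compOf i (rowOf X x.2) x

theorem exists_maximal_rowSeg {X : Set Pt} (hX : X.Finite) {p : Pt} (hp : p ∈ X) :
    ∃ a b : ℤ, a ≤ p.1 ∧ p.1 ≤ b ∧ rowSeg p.2 a b ⊆ X ∧ (a - 1, p.2) ∉ X ∧ (b + 1, p.2) ∉ X := by
  obtain ⟨M, hM⟩ := exists_bound hX
  have hbdd : ∀ t, (t, p.2) ∈ X → -M < t ∧ t < M := fun t ht => by have := hM _ ht; omega
  have hpX : (p.1, p.2) ∈ X := hp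
  obtain ⟨a, ⟨hap, haX⟩, hamin⟩ := Int.exists_least_of_bdd
    (P := fun a => a ≤ p.1 ∧ ∀ t, a ≤ t → t ≤ p.1 → (t, p.2) ∈ X)
    ⟨-M, fun a ha => (hbdd a (ha.2 a le_rfl ha.1)).1.le⟩
    ⟨p.1, le_rfl, fun t h₁ h₂ => le_antisymm h₂ h₁ ▸ hpX⟩
  obtain ⟨b, ⟨hpb, hbX⟩, hbmax⟩ := Int.exists_greatest_of_bdd
    (P := fun b => p.1 ≤ b ∧ ∀ t, p.1 ≤ t → t ≤ b → (t, p.2) ∈ X)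
    ⟨M, fun b hb => (hbdd b (hb.2 b hb.1 le_rfl)).2.le⟩
    ⟨p.1, le_rfl, fun t h₁ h₂ => le_antisymm h₂ h₁ ▸ hpX⟩
  refine ⟨a, b, hap, hpb, ?_, fun h => ?_, fun h => ?_⟩
  · rintro ⟨x, y⟩ ⟨rfl, h₁, h₂⟩
    rcases le_total x p.1 with h | h
    exacts [haX x h₁ h, hbX x h h₂]
  · have := hamin (a - 1) ⟨by omega, fun t h₁ h₂ => by
      rcases eq_or_lt_of_le h₁ with rfl | h₁
      exacts [h, haX t (by omega) h₂]⟩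
    omega
  · have := hbmax (b + 1) ⟨by omega, fun t h₁ h₂ => by
      rcases eq_or_lt_of_le h₂ with rfl | h₂
      exacts [h, hbX t h₁ (by omega)]⟩
    omega

theorem rowCompOf_eq_rowSeg {i : ℕ} {X : Set Pt} {p : Pt} {a b : ℤ} (ha : a ≤ p.1)
    (hb : p.1 ≤ b) (hseg : rowSeg p.2 a b ⊆ X) (ha' : (a - 1, p.2) ∉ X) (hb' : (b + 1, p.2) ∉ X) :
    rowCompOf i X p = rowSeg p.2 a b := by
  ext q
  constructor
  · intro hq
    replace hq := (chainIn_iff.mp hq).2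
    induction hq with
    | refl => exact ⟨rfl, ha, hb⟩
    | @tail u v _ huv ih =>
      obtain ⟨⟨-, -⟩, ⟨hvX, hv⟩, hadj⟩ := huv
      rw [cAdj_iff] at hadj
      obtain ⟨hu, hau, hub⟩ := ih
      refine ⟨hv, ?_, ?_⟩ <;> by_contra h
      · have e : v = (a - 1, p.2) := Prod.ext (by omega) hv
        exact ha' (e ▸ hvX)
      · have e : v = (b + 1, p.2) := Prod.ext (by omega) hv
        exact hb' (e ▸ hvX)
  · rintro ⟨hq, h₁, h₂⟩
    have := chainIn_horizontal (i := i) (S := rowOf X p.2) (y := p.2) (a := p.1) (b := q.1)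
      fun x h₁ h₂ => ⟨hseg ⟨rfl, by omega, by omega⟩, rfl⟩
    rw [show q = (q.1, p.2) from Prod.ext rfl hq]
    exact this

theorem mem_rowCompOf_self {i : ℕ} {X : Set Pt} {x : Pt} (hx : x ∈ X) : x ∈ rowCompOf i X x :=
  ChainIn.refl ⟨hx, rfl⟩

theorem isRowComp_rowCompOf {i : ℕ} {X : Set Pt} {x : Pt} (hx : x ∈ X) :
    IsRowComp i X (rowCompOf i X x) :=
  ⟨x.2, x, ⟨hx, rfl⟩, rfl⟩

theorem mem_rowCompOf_of_cAdj {i : ℕ} {X : Set Pt} {x y : Pt} (hx : x ∈ X) (hy : y ∈ X)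
    (hxy : x.2 = y.2) (h : cAdj i x y) : y ∈ rowCompOf i X x :=
  ChainIn.single ⟨hx, rfl⟩ ⟨hy, hxy.symm⟩ h

theorem IsRowComp.subset {i : ℕ} {X r : Set Pt} (hr : IsRowComp i X r) : r ⊆ X := by
  obtain ⟨k, p, -, rfl⟩ := hr
  exact fun q hq => hq.mem_right.1

theorem IsRowComp.eq_rowCompOf {i : ℕ} {X r : Set Pt} (hr : IsRowComp i X r) {x : Pt}
    (hx : x ∈ r) : r = rowCompOf i X x := by
  obtain ⟨k, p, -, rfl⟩ := hr
  have hk : x.2 = k := hx.mem_right.2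
  ext y
  rw [rowCompOf, hk]
  exact ⟨fun hy => hx.symm.trans hy, fun hy => hx.trans hy⟩

theorem IsRowComp.eq_of_mem {i : ℕ} {X r s : Set Pt} (hr : IsRowComp i X r)
    (hs : IsRowComp i X s) {x : Pt} (hxr : x ∈ r) (hxs : x ∈ s) : r = s :=
  (hr.eq_rowCompOf hxr).trans (hs.eq_rowCompOf hxs).symm

theorem IsRowComp.exists_eq_rowSeg {i : ℕ} {X r : Set Pt} (hX : X.Finite)
    (hr : IsRowComp i X r) :
    ∃ k a b : ℤ, a ≤ b ∧ r = rowSeg k a b ∧ rowSeg k a b ⊆ X ∧ (a - 1, k) ∉ X ∧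
      (b + 1, k) ∉ X := by
  obtain ⟨k, p, ⟨hpX, rfl⟩, rfl⟩ := hr
  obtain ⟨a, b, ha, hb, hseg, ha', hb'⟩ := exists_maximal_rowSeg hX hpX
  exact ⟨p.2, a, b, ha.trans hb, rowCompOf_eq_rowSeg ha hb hseg ha' hb', hseg, ha', hb'⟩

theorem IsRowComp.snd_eq {i : ℕ} {X r : Set Pt} (hr : IsRowComp i X r) {p q : Pt} (hp : p ∈ r)
    (hq : q ∈ r) : p.2 = q.2 := by
  obtain ⟨k, x, -, rfl⟩ := hr
  exact hp.mem_right.2.trans hq.mem_right.2.symm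

theorem IsRowComp.snd_eq_choose {i : ℕ} {X r : Set Pt} (hr : IsRowComp i X r) {p : Pt}
    (hp : p ∈ r) : p.2 = hr.choose := by
  obtain ⟨q, -, hrq⟩ := hr.choose_spec
  rw [hrq] at hp
  exact hp.mem_right.2

theorem IsRowComp.mem_of_le_of_le {i : ℕ} {X r : Set Pt} (hX : X.Finite) (hr : IsRowComp i X r)
    {p q x : Pt} (hp : p ∈ r) (hq : q ∈ r) (hx : x.2 = p.2) (h₁ : p.1 ≤ x.1) (h₂ : x.1 ≤ q.1) :
    x ∈ r := by
  obtain ⟨k, a, b, -, rfl, -⟩ := hr.exists_eq_rowSeg hX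
  simp only [mem_rowSeg] at *
  omega

theorem IsRowComp.snd_ne_of_cAdj {i : ℕ} {X r s : Set Pt} (hr : IsRowComp i X r)
    (hs : IsRowComp i X s) (hrs : r ≠ s) {p q : Pt} (hp : p ∈ r) (hq : q ∈ s) (hpq : cAdj i p q) :
    p.2 ≠ q.2 := fun h => hrs (hr.eq_of_mem hs (hr.eq_rowCompOf hp ▸
  mem_rowCompOf_of_cAdj (hr.subset hp) (hs.subset hq) h hpq) hq)

theorem exists_gap_of_le {i : ℕ} {X r s : Set Pt} (hr : IsRowComp i X r) (hs : IsRowComp i X s)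
    (hrs : r ≠ s) {x y : Pt} (hx : x ∈ r) (hy : y ∈ s) (hxy : x.2 = y.2) (hle : x.1 ≤ y.1) :
    ∃ c, x.1 < c ∧ c < y.1 ∧ (c, x.2) ∉ X := by
  by_contra! h
  have hxX := hr.subset hx
  have hyX := hs.subset hy
  have hchain : ChainIn i (rowOf X x.2) (x.1, x.2) (y.1, x.2) :=
    chainIn_horizontal_of_le hle fun c h₁ h₂ => ⟨by
      rcases eq_or_lt_of_le h₁ with rfl | h₁
      · exact hxX
      rcases eq_or_lt_of_le h₂ with rfl | h₂
      · exact hxy ▸ hyX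
      exact h c h₁ h₂, rfl⟩
  have hyr : y ∈ rowCompOf i X x := by
    rw [show y = (y.1, x.2) from Prod.ext rfl hxy.symm]
    exact hchain
  exact hrs (hr.eq_of_mem hs (hr.eq_rowCompOf hx ▸ hyr) hy)

theorem exists_gap {i : ℕ} {X r s : Set Pt} (hr : IsRowComp i X r) (hs : IsRowComp i X s)
    (hrs : r ≠ s) {x y : Pt} (hx : x ∈ r) (hy : y ∈ s) (hxy : x.2 = y.2) :
    ∃ c, (x.1 < c ∧ c < y.1 ∨ y.1 < c ∧ c < x.1) ∧ (c, x.2) ∉ X := by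
  rcases le_total x.1 y.1 with h | h
  · obtain ⟨c, h₁, h₂, hc⟩ := exists_gap_of_le hr hs hrs hx hy hxy h
    exact ⟨c, .inl ⟨h₁, h₂⟩, hc⟩
  · obtain ⟨c, h₁, h₂, hc⟩ := exists_gap_of_le hs hr hrs.symm hy hx hxy.symm h
    exact ⟨c, .inr ⟨h₁, h₂⟩, hxy ▸ hc⟩

abbrev RowComp (i : ℕ) (X : Set Pt) : Type := {r : Set Pt // IsRowComp i X r}

/-- The row component graph `R(X, c_i)`. -/
def rowCompGraph (i : ℕ) (X : Set Pt) : SimpleGraph (RowComp i X) :=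
  SimpleGraph.fromRel fun r s => setAdj i r.1 s.1

theorem rowCompGraph_adj {i : ℕ} {X : Set Pt} {r s : RowComp i X} :
    (rowCompGraph i X).Adj r s ↔ r ≠ s ∧ setAdj i r.1 s.1 := by
  have hsymm : ∀ {A B : Set Pt}, setAdj i A B → setAdj i B A :=
    fun ⟨a, ha, b, hb, h⟩ => ⟨b, hb, a, ha, h.symm⟩
  simp only [rowCompGraph, SimpleGraph.fromRel_adj]
  exact ⟨fun ⟨h, h'⟩ => ⟨h, h'.elim id hsymm⟩, fun ⟨h, h'⟩ => ⟨h, .inl h'⟩⟩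

theorem rowCompGraph_reachable_of_cAdj {i : ℕ} {X : Set Pt} {x y : Pt} (hx : x ∈ X)
    (hy : y ∈ X) (h : cAdj i x y) :
    (rowCompGraph i X).Reachable ⟨rowCompOf i X x, isRowComp_rowCompOf hx⟩
      ⟨rowCompOf i X y, isRowComp_rowCompOf hy⟩ := by
  by_cases hxy : x.2 = y.2
  · have he := (isRowComp_rowCompOf (i := i) hx).eq_rowCompOf (mem_rowCompOf_of_cAdj hx hy hxy h)
    simp only [he]
    rfl
  · refine SimpleGraph.Adj.reachable (rowCompGraph_adj.mpr ⟨fun he => hxy ?_,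
      x, mem_rowCompOf_self hx, y, mem_rowCompOf_self hy, h⟩)
    have : y ∈ rowCompOf i X x := by
      rw [show rowCompOf i X x = rowCompOf i X y from congrArg Subtype.val he]
      exact mem_rowCompOf_self hy
    exact this.mem_right.2.symm

theorem rowCompGraph_connected {i : ℕ} {X : Set Pt} (hne : X.Nonempty) (hconn : Conn i X) :
    (rowCompGraph i X).Connected := by
  have hvert : ∀ r : RowComp i X, ∃ x, ∃ hx : x ∈ X,
      r = ⟨rowCompOf i X x, isRowComp_rowCompOf hx⟩ := fun r => by
    obtain ⟨k, p, hp, hr⟩ := r.2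
    have hpr : p ∈ r.1 := hr ▸ ChainIn.refl hp
    exact ⟨p, hp.1, Subtype.ext (r.2.eq_rowCompOf hpr)⟩
  obtain ⟨x₀, hx₀⟩ := hne
  have : Nonempty (RowComp i X) := ⟨⟨_, isRowComp_rowCompOf hx₀⟩⟩
  refine ⟨fun r s => ?_⟩
  obtain ⟨x, hx, rfl⟩ := hvert r
  obtain ⟨y, hy, rfl⟩ := hvert s
  obtain ⟨-, hxy⟩ := chainIn_iff.mp (hconn x hx y hy)
  induction hxy with
  | refl => rfl
  | tail _ huv ih => exact (ih huv.1).trans (rowCompGraph_reachable_of_cAdj huv.1 huv.2.1 huv.2.2)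

theorem exists_leaf {i : ℕ} {X : Set Pt} (hX : X.Finite) (hne : X.Nonempty) (hconn : Conn i X)
    (hacyc : (rowCompGraph i X).IsAcyclic) (hnt : Nontrivial (RowComp i X)) :
    ∃ T N, (rowCompGraph i X).Adj T N ∧ ∀ N', (rowCompGraph i X).Adj T N' → N' = N := by
  have : Finite (RowComp i X) :=
    (hX.finite_subsets.subset fun _ hr => IsRowComp.subset hr).to_subtype
  have := Fintype.ofFinite (RowComp i X)
  classical
  obtain ⟨T, hT⟩ := SimpleGraph.IsTree.exists_vert_degree_one_of_nontrivial
    ⟨rowCompGraph_connected hne hconn, hacyc⟩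
  obtain ⟨N, hN, huniq⟩ := SimpleGraph.degree_eq_one_iff_existsUnique_adj.mp hT
  exact ⟨T, N, hN, huniq⟩

/-! ### The row component graph is acyclic -/

def edgeSum (E : Multiset (Pt × Pt)) (c : Pt → Pt → ZMod 2) : ZMod 2 :=
  (E.map fun e => c e.1 e.2).sum

theorem edgeSum_congr {E : Multiset (Pt × Pt)} {c d : Pt → Pt → ZMod 2}
    (h : ∀ e ∈ E, c e.1 e.2 = d e.1 e.2) : edgeSum E c = edgeSum E d :=
  congrArg Multiset.sum (Multiset.map_congr rfl h)

theorem edgeSum_add_distrib (E : Multiset (Pt × Pt)) (c d : Pt → Pt → ZMod 2) :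
    edgeSum E (fun u v => c u v + d u v) = edgeSum E c + edgeSum E d :=
  Multiset.sum_map_add

theorem edgeSum_eq_zero {E : Multiset (Pt × Pt)} {c : Pt → Pt → ZMod 2}
    (h : ∀ e ∈ E, c e.1 e.2 = 0) : edgeSum E c = 0 :=
  Multiset.sum_eq_zero fun _ hx => by
    obtain ⟨e, he, rfl⟩ := Multiset.mem_map.mp hx
    exact h e he

theorem edgeSum_cons (e : Pt × Pt) (E : Multiset (Pt × Pt)) (c : Pt → Pt → ZMod 2) :
    edgeSum (e ::ₘ E) c = c e.1 e.2 + edgeSum E c := by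
  simp [edgeSum]

theorem edgeSum_add (E F : Multiset (Pt × Pt)) (c : Pt → Pt → ZMod 2) :
    edgeSum (E + F) c = edgeSum E c + edgeSum F c := by
  simp [edgeSum]

theorem edgeSum_sum {ι : Type*} (s : Finset ι) (E : ι → Multiset (Pt × Pt))
    (c : Pt → Pt → ZMod 2) : edgeSum (∑ t ∈ s, E t) c = ∑ t ∈ s, edgeSum (E t) c := by
  classical
  induction s using Finset.induction_on with
  | empty => rfl
  | insert t s ht ih => rw [Finset.sum_insert ht, Finset.sum_insert ht, edgeSum_add, ih]

/-- Every point has even degree in `E`. -/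
def IsMod2Cycle (E : Multiset (Pt × Pt)) : Prop :=
  ∀ g : Pt → ZMod 2, edgeSum E (fun u v => g u + g v) = 0

def leftOf (p w : Pt) : ZMod 2 := if w.1 < p.1 then 1 else 0

/-- Whether the edge `uv` crosses the vertical half-line `{p.1 - 1/2} × (p.2, ∞)`. -/
def upCross (p u v : Pt) : ZMod 2 := if 2 * p.2 < u.2 + v.2 then leftOf p u + leftOf p v else 0

def colAbove (p w : Pt) : ZMod 2 := if w.1 = p.1 ∧ p.2 < w.2 then 1 else 0

theorem upCross_eq_of_above {p q u v : Pt} (hq : q = (p.1, p.2 + 1)) (huv : cAdj 2 u v)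
    (hu : u ≠ p ∧ u ≠ q) (hv : v ≠ p ∧ v ≠ q) : upCross p u v = upCross q u v := by
  subst hq
  simp only [cAdj_two_iff, ne_eq, Prod.ext_iff] at huv hu hv
  unfold upCross leftOf
  split_ifs <;> first | rfl | omega

theorem upCross_add_upCross_of_right {p q u v : Pt} (hq : q.1 = p.1 + 1) (hpq : cAdj 2 p q)
    (huv : cAdj 2 u v) (hax : q.2 = p.2 ∨ cAdj 1 u v) (hu : u ≠ p ∧ u ≠ q) (hv : v ≠ p ∧ v ≠ q) :
    upCross p u v + upCross q u v = colAbove p u + colAbove p v := by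
  simp only [cAdj_one_iff, cAdj_two_iff, ne_eq, Prod.ext_iff] at hpq huv hax hu hv
  unfold upCross leftOf colAbove
  split_ifs <;> first | rfl | decide | omega

theorem edgeSum_upCross_eq_of_right {E : Multiset (Pt × Pt)} (hE : IsMod2Cycle E)
    {p q : Pt} (hq : q.1 = p.1 + 1) (hpq : cAdj 2 p q)
    (hEpq : ∀ e ∈ E, cAdj 2 e.1 e.2 ∧ (q.2 = p.2 ∨ cAdj 1 e.1 e.2) ∧ (e.1 ≠ p ∧ e.1 ≠ q) ∧
      (e.2 ≠ p ∧ e.2 ≠ q)) :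
    edgeSum E (upCross p) = edgeSum E (upCross q) := by
  rw [← CharTwo.add_eq_zero, ← edgeSum_add_distrib, ← hE (colAbove p)]
  refine edgeSum_congr fun e he => ?_
  obtain ⟨h₁, h₂, h₃, h₄⟩ := hEpq e he
  exact upCross_add_upCross_of_right hq hpq h₁ h₂ h₃ h₄

theorem edgeSum_upCross_eq_of_cAdj {i j : ℕ} (hij : (i = 1 ∧ j = 2) ∨ (i = 2 ∧ j = 1))
    {X : Set Pt} {E : Multiset (Pt × Pt)} (hE : IsMod2Cycle E)
    (hEX : ∀ e ∈ E, e.1 ∈ X ∧ e.2 ∈ X ∧ cAdj i e.1 e.2) {p q : Pt} (hp : p ∉ X) (hq : q ∉ X)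
    (hpq : cAdj j p q) : edgeSum E (upCross p) = edgeSum E (upCross q) := by
  have hne : ∀ e ∈ E, (e.1 ≠ p ∧ e.1 ≠ q) ∧ (e.2 ≠ p ∧ e.2 ≠ q) := fun e he => by
    obtain ⟨h₁, h₂, -⟩ := hEX e he
    exact ⟨⟨ne_of_mem_of_not_mem h₁ hp, ne_of_mem_of_not_mem h₁ hq⟩,
      ⟨ne_of_mem_of_not_mem h₂ hp, ne_of_mem_of_not_mem h₂ hq⟩⟩
  -- a diagonal step of `p` forces `j = 2`, hence axis-parallel edges
  have hax : ∀ e ∈ E, p.2 = q.2 ∨ p.1 = q.1 ∨ cAdj 1 e.1 e.2 := fun e he => by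
    have h := (hEX e he).2.2
    rw [cAdj_iff] at hpq h
    rw [cAdj_one_iff]
    omega
  have hpq2 : cAdj 2 p q := hpq.two
  rw [cAdj_two_iff] at hpq2
  rcases (by omega : p.1 = q.1 ∨ q.1 = p.1 + 1 ∨ p.1 = q.1 + 1) with h | h | h
  · rcases (by omega : p.2 = q.2 ∨ q.2 = p.2 + 1 ∨ p.2 = q.2 + 1) with h' | h' | h'
    · rw [Prod.ext h h']
    · exact edgeSum_congr fun e he =>
        upCross_eq_of_above (Prod.ext h.symm h') (hEX e he).2.2.two (hne e he).1 (hne e he).2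
    · refine (edgeSum_congr fun e he => ?_).symm
      have ⟨h₁, h₂⟩ := hne e he
      exact upCross_eq_of_above (Prod.ext h h') (hEX e he).2.2.two h₁.symm h₂.symm
  · refine edgeSum_upCross_eq_of_right hE h hpq.two fun e he => ⟨(hEX e he).2.2.two, ?_, hne e he⟩
    rcases hax e he with h' | h' | h' <;> first | omega | exact .inr h'
  · refine (edgeSum_upCross_eq_of_right hE h hpq.symm.two fun e he =>
      ⟨(hEX e he).2.2.two, ?_, (hne e he).1.symm, (hne e he).2.symm⟩).symm
    rcases hax e he with h' | h' | h' <;> first | omega | exact .inr h'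

theorem edgeSum_upCross_eq_of_chainIn {i j : ℕ} (hij : (i = 1 ∧ j = 2) ∨ (i = 2 ∧ j = 1))
    {X : Set Pt} {E : Multiset (Pt × Pt)} (hE : IsMod2Cycle E)
    (hEX : ∀ e ∈ E, e.1 ∈ X ∧ e.2 ∈ X ∧ cAdj i e.1 e.2) {p q : Pt} (h : ChainIn j Xᶜ p q) :
    edgeSum E (upCross p) = edgeSum E (upCross q) := by
  replace h := (chainIn_iff.mp h).2
  induction h with
  | refl => rfl
  | tail _ huv ih => exact ih.trans (edgeSum_upCross_eq_of_cAdj hij hE hEX huv.1 huv.2.1 huv.2.2)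

/-- Move `p` along a path in `Xᶜ` to a point right of `X`, whose ray meets no edge. -/
theorem edgeSum_upCross_eq_zero {i j : ℕ} (hij : (i = 1 ∧ j = 2) ∨ (i = 2 ∧ j = 1))
    {X : Set Pt} (hX : X.Finite) (hXc : Conn j Xᶜ) {E : Multiset (Pt × Pt)} (hE : IsMod2Cycle E)
    (hEX : ∀ e ∈ E, e.1 ∈ X ∧ e.2 ∈ X ∧ cAdj i e.1 e.2) {p : Pt} (hp : p ∉ X) :
    edgeSum E (upCross p) = 0 := by
  obtain ⟨M, hM⟩ := exists_bound hX
  have hfar : ((M, 0) : Pt) ∉ X := fun h => by have := hM _ h; simp at this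
  rw [edgeSum_upCross_eq_of_chainIn hij hE hEX (hXc p hp _ hfar)]
  refine Multiset.sum_eq_zero fun x hx => ?_
  obtain ⟨e, he, rfl⟩ := Multiset.mem_map.mp hx
  have h₁ := hM _ (hEX e he).1
  have h₂ := hM _ (hEX e he).2.1
  simp only [upCross, leftOf, if_pos h₁.2.1, if_pos h₂.2.1, CharTwo.add_self_eq_zero, ite_self]

/-- The edges of the horizontal path from `u` to `(v.1, u.2)` (one of the two intervals is
empty). -/
noncomputable def rowPath (u v : Pt) : Multiset (Pt × Pt) :=
  ((Finset.Ico u.1 v.1).val + (Finset.Ico v.1 u.1).val).map fun x => ((x, u.2), (x + 1, u.2))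

theorem mem_rowPath {u v : Pt} {e : Pt × Pt} :
    e ∈ rowPath u v ↔ ∃ x, (u.1 ≤ x ∧ x < v.1 ∨ v.1 ≤ x ∧ x < u.1) ∧
      e = ((x, u.2), (x + 1, u.2)) := by
  simp only [rowPath, Multiset.mem_map, Multiset.mem_add, Finset.mem_val, Finset.mem_Ico]
  exact ⟨fun ⟨x, hx, he⟩ => ⟨x, hx, he.symm⟩, fun ⟨x, hx, he⟩ => ⟨x, hx, he.symm⟩⟩

theorem sum_Ico_add_add_one (h : ℤ → ZMod 2) {a b : ℤ} (hab : a ≤ b) :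
    ∑ x ∈ Finset.Ico a b, (h x + h (x + 1)) = h a + h b := by
  induction b, hab using Int.leInduction with
  | base => simp [CharTwo.add_self_eq_zero]
  | succ b hab ih =>
    rw [← Finset.sum_Ico_add_eq_sum_Ico_add_one hab, ih, add_assoc, CharTwo.add_cancel_left]

theorem edgeSum_rowPath {u v : Pt} (huv : u.2 = v.2) (g : Pt → ZMod 2) :
    edgeSum (rowPath u v) (fun a b => g a + g b) = g u + g v := by
  have hv : v = (v.1, u.2) := Prod.ext rfl huv.symm
  simp only [edgeSum, rowPath, Multiset.map_map, Function.comp_def, Multiset.map_add,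
    Multiset.sum_add, ← Finset.sum_eq_multiset_sum]
  rcases le_total u.1 v.1 with h | h
  · rw [Finset.Ico_eq_empty_of_le h, Finset.sum_empty, add_zero,
      sum_Ico_add_add_one (fun x => g (x, u.2)) h, hv]
  · rw [Finset.Ico_eq_empty_of_le h, Finset.sum_empty, zero_add,
      sum_Ico_add_add_one (fun x => g (x, u.2)) h, hv, add_comm]

theorem rowPath_subset {i : ℕ} {X r : Set Pt} (hX : X.Finite) (hr : IsRowComp i X r) {u v : Pt}
    (hu : u ∈ r) (hv : v ∈ r) {e : Pt × Pt} (he : e ∈ rowPath u v) :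
    e.1 ∈ r ∧ e.2 ∈ r ∧ e.1.2 = u.2 ∧ e.2 = (e.1.1 + 1, u.2) := by
  obtain ⟨x, hx, rfl⟩ := mem_rowPath.mp he
  have huv := hr.snd_eq hu hv
  refine ⟨?_, ?_, rfl, rfl⟩ <;> rcases hx with ⟨h₁, h₂⟩ | ⟨h₁, h₂⟩
  · exact hr.mem_of_le_of_le hX hu hv rfl h₁ h₂.le
  · exact hr.mem_of_le_of_le hX hv hu huv h₁ h₂.le
  · exact hr.mem_of_le_of_le hX hu hv rfl (by simp; omega) (by simp; omega)
  · exact hr.mem_of_le_of_le hX hv hu huv (by simp; omega) (by simp; omega)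

theorem sum_range_mod_add_one {M : Type*} [AddCommMonoid M] (f : ℕ → M) (k : ℕ) :
    ∑ t ∈ Finset.range k, f ((t + 1) % k) = ∑ t ∈ Finset.range k, f t := by
  cases k with
  | zero => rfl
  | succ n =>
    rw [Finset.sum_range_succ, Finset.sum_range_succ' f, Nat.mod_self]
    congr 1
    exact Finset.sum_congr rfl fun t ht =>
      congrArg f (Nat.mod_eq_of_lt (by simpa using ht))

/-- The closed walk that, for `t < k`, jumps from `z t` to `w t` and then runs along the row
of `w t` to `z (t + 1)` (indices mod `k`). -/
noncomputable def loopEdges (k : ℕ) (z w : ℕ → Pt) : Multiset (Pt × Pt) :=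
  ∑ t ∈ Finset.range k, ((z t, w t) ::ₘ rowPath (w t) (z ((t + 1) % k)))

theorem isMod2Cycle_loopEdges {k : ℕ} {z w : ℕ → Pt}
    (hrow : ∀ t < k, (w t).2 = (z ((t + 1) % k)).2) : IsMod2Cycle (loopEdges k z w) := by
  intro g
  rw [loopEdges, edgeSum_sum, Finset.sum_congr rfl fun t ht => by
    rw [edgeSum_cons, edgeSum_rowPath (hrow t (Finset.mem_range.mp ht)), ← add_assoc,
      CharTwo.add_cancel_right], Finset.sum_add_distrib, sum_range_mod_add_one (fun t => g (z t)),
    CharTwo.add_self_eq_zero]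

theorem upCross_eq_zero {c y : ℤ} {u v : Pt} (huv : cAdj 2 u v) (hu : u.2 ≤ y + 1)
    (hv : v.2 ≤ y + 1) (hu' : u ≠ (c, y) ∧ u ≠ (c, y + 1)) (hv' : v ≠ (c, y) ∧ v ≠ (c, y + 1)) :
    upCross (c, y) u v = 0 := by
  simp only [cAdj_two_iff, ne_eq, Prod.ext_iff] at huv hu' hv'
  unfold upCross leftOf
  split_ifs <;> first | rfl | decide | omega

theorem edgeSum_rowPath_upCross_of_le {c y : ℤ} {u v : Pt} (hu : u.2 ≤ y) :
    edgeSum (rowPath u v) (upCross (c, y)) = 0 :=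
  edgeSum_eq_zero fun e he => by
    obtain ⟨x, -, rfl⟩ := mem_rowPath.mp he
    exact if_neg (by dsimp only; omega)

theorem edgeSum_rowPath_upCross_of_lt {c y : ℤ} {u v : Pt} (huv : u.2 = v.2) (hu : y < u.2) :
    edgeSum (rowPath u v) (upCross (c, y)) = leftOf (c, y) u + leftOf (c, y) v := by
  rw [← edgeSum_rowPath huv]
  exact edgeSum_congr fun e he => by
    obtain ⟨x, -, rfl⟩ := mem_rowPath.mp he
    exact if_pos (by dsimp only; omega)

/-- An edge crossing the ray above the gap `(c, y)` must end at `(c, y + 1)`, as no point of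
`r ∪ r'` lies higher. -/
theorem edgeSum_piece_upCross_eq_zero {i : ℕ} {X r r' : Set Pt} (hX : X.Finite)
    (hr : IsRowComp i X r) (hr' : IsRowComp i X r') {c y : ℤ} (hg : (c, y) ∉ X)
    (htop : (c, y + 1) ∉ r ∪ r') (hle : ∀ p ∈ r ∪ r', p.2 ≤ y + 1) {u v v' : Pt} (hu : u ∈ r)
    (hv : v ∈ r') (hv' : v' ∈ r') (huv : cAdj 2 u v) :
    edgeSum ((u, v) ::ₘ rowPath v v') (upCross (c, y)) = 0 := by
  have hne : ∀ p ∈ r ∪ r', p ≠ (c, y) ∧ p ≠ (c, y + 1) := fun p hp =>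
    ⟨ne_of_mem_of_not_mem (hp.elim (fun h => hr.subset h) fun h => hr'.subset h) hg,
      ne_of_mem_of_not_mem hp htop⟩
  rw [edgeSum_cons, upCross_eq_zero huv (hle u (.inl hu)) (hle v (.inr hv)) (hne u (.inl hu))
    (hne v (.inr hv)), zero_add]
  refine edgeSum_eq_zero fun e he => ?_
  obtain ⟨h₁, h₂, h₃, h₄⟩ := rowPath_subset hX hr' hv hv' he
  exact upCross_eq_zero (by rw [h₄, cAdj_two_iff]; omega) (hle _ (.inr h₁)) (hle _ (.inr h₂))
    (hne _ (.inr h₁)) (hne _ (.inr h₂))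

theorem exists_loopEdges_of_rowComp_cycle {i : ℕ} {X : Set Pt} (hX : X.Finite) {k : ℕ}
    {R : ℕ → Set Pt} (hR : ∀ t ≤ k, IsRowComp i X (R t)) (hRk : R k = R 0)
    (hadj : ∀ t < k, setAdj i (R t) (R (t + 1))) :
    ∃ z w : ℕ → Pt, (∀ t < k, z t ∈ R t ∧ w t ∈ R (t + 1) ∧ cAdj i (z t) (w t)) ∧
      IsMod2Cycle (loopEdges k z w) ∧
      ∀ e ∈ loopEdges k z w, e.1 ∈ X ∧ e.2 ∈ X ∧ cAdj i e.1 e.2 := by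
  have hzw : ∀ t, ∃ z w : Pt, t < k → z ∈ R t ∧ w ∈ R (t + 1) ∧ cAdj i z w := fun t => by
    by_cases ht : t < k
    · obtain ⟨z, hz, w, hw, h⟩ := hadj t ht
      exact ⟨z, w, fun _ => ⟨hz, hw, h⟩⟩
    · exact ⟨0, 0, fun h => absurd h ht⟩
  choose z w he using hzw
  have hzn : ∀ t < k, z ((t + 1) % k) ∈ R (t + 1) := by
    intro t ht
    rcases (by omega : t + 1 < k ∨ t + 1 = k) with h | h
    · rw [Nat.mod_eq_of_lt h]; exact (he _ h).1
    · rw [h, Nat.mod_self, hRk]; exact (he 0 (by omega)).1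
  refine ⟨z, w, he, isMod2Cycle_loopEdges fun t ht => (hR _ ht).snd_eq (he t ht).2.1 (hzn t ht),
    fun e he' => ?_⟩
  obtain ⟨t, ht, he'⟩ := Multiset.mem_sum.mp he'
  rw [Finset.mem_range] at ht
  rcases Multiset.mem_cons.mp he' with rfl | he'
  · exact ⟨(hR t ht.le).subset (he t ht).1, (hR _ ht).subset (he t ht).2.1, (he t ht).2.2⟩
  · obtain ⟨h₁, h₂, h₃, h₄⟩ := rowPath_subset hX (hR _ ht) (he t ht).2.1 (hzn t ht) he'
    refine ⟨(hR _ ht).subset h₁, (hR _ ht).subset h₂, ?_⟩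
    rw [h₄, cAdj_iff]; omega

/-- A cycle of row components `R 0, …, R k = R 0` with topmost member `R 0` winds around the
gap in the row below `R 0` between its two neighbours `R (k - 1)` and `R 1`. -/
theorem false_of_rowComp_cycle {i j : ℕ} (hij : (i = 1 ∧ j = 2) ∨ (i = 2 ∧ j = 1)) {X : Set Pt}
    (hX : X.Finite) (hXc : Conn j Xᶜ) {k : ℕ} (hk : 3 ≤ k) {R : ℕ → Set Pt}
    (hR : ∀ t ≤ k, IsRowComp i X (R t)) (hRk : R k = R 0)
    (hadj : ∀ t < k, setAdj i (R t) (R (t + 1))) (h0 : ∀ t < k, R t = R 0 → t = 0)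
    (h1 : R 1 ≠ R (k - 1))
    (htop : ∀ t ≤ k, ∀ p ∈ R t, ∀ q ∈ R 0, p.2 ≤ q.2) : False := by
  obtain ⟨z, w, he, hE, hEX⟩ :=
    exists_loopEdges_of_rowComp_cycle hX hR hRk hadj
  have hR0 := hR 0 (by omega)
  have hz0 : z 0 ∈ R 0 := (he 0 (by omega)).1
  have hwk : w (k - 1) ∈ R 0 := by
    have := (he (k - 1) (by omega)).2.1; rwa [Nat.sub_add_cancel (by omega), hRk] at this
  obtain ⟨y, hy⟩ : ∃ y, (z 0).2 = y + 1 := ⟨(z 0).2 - 1, by ring⟩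
  have hle : ∀ t ≤ k, ∀ p ∈ R t, p.2 ≤ y + 1 := fun t ht p hp => hy ▸ htop t ht p hp _ hz0
  have hbelow : ∀ s ≤ k, R s ≠ R 0 → ∀ p ∈ R 0, ∀ q ∈ R s, cAdj i p q → q.2 = y := by
    intro s hs hs0 p hp q hq hpq
    have hpY : p.2 = y + 1 := hy ▸ hR0.snd_eq hp hz0
    have hne := hR0.snd_ne_of_cAdj (hR s hs) (Ne.symm hs0) hp hq hpq
    have := hle s hs q hq
    rw [cAdj_iff] at hpq
    omega
  have hk1 : R (k - 1) ≠ R 0 := fun h => by have := h0 (k - 1) (by omega) h; omega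
  have hR1 : R 1 ≠ R 0 := fun h => by have := h0 1 (by omega) h; omega
  have ha := (he (k - 1) (by omega)).1
  have hb := (he 0 (by omega)).2.1
  have haY : (z (k - 1)).2 = y := hbelow _ (by omega) hk1 _ hwk _ ha (he _ (by omega)).2.2.symm
  have hbY : (w 0).2 = y := hbelow _ (by omega) hR1 _ hz0 _ hb (he 0 (by omega)).2.2
  obtain ⟨c, hc, hcX⟩ := exists_gap (hR _ (by omega)) (hR 1 (by omega)) h1.symm ha hb
    (haY.trans hbY.symm)
  rw [haY] at hcX
  have hwY : (w (k - 1)).2 = y + 1 := hy ▸ hR0.snd_eq hwk hz0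
  have htopc : ((c, y + 1) : Pt) ∈ R 0 := by
    have h₁ := (he _ (by omega : k - 1 < k)).2.2
    have h₂ := (he 0 (by omega)).2.2
    rw [cAdj_iff] at h₁ h₂
    rcases hc with hc | hc
    · exact hR0.mem_of_le_of_le hX hwk hz0 hwY.symm (by simp; omega) (by simp; omega)
    · exact hR0.mem_of_le_of_le hX hz0 hwk hy.symm (by simp; omega) (by simp; omega)
  -- only the pieces `k - 1` and `0`, which pass through `R 0`, cross the ray above the gap
  have hsum := edgeSum_upCross_eq_zero hij hX hXc hE hEX hcX
  rw [loopEdges, edgeSum_sum, Finset.sum_eq_add (k - 1) 0 (by omega) ?_ (by simp; omega)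
    (by simp; omega), edgeSum_cons, edgeSum_cons, Nat.sub_add_cancel (by omega), Nat.mod_self,
    edgeSum_rowPath_upCross_of_lt (hwY.trans hy.symm) (by omega),
    edgeSum_rowPath_upCross_of_le (by omega)] at hsum
  · dsimp only at hsum
    rw [upCross, if_pos (by omega), upCross, if_pos (by omega)] at hsum
    have hparity : leftOf (c, y) (z (k - 1)) + leftOf (c, y) (w 0) = 1 := by
      rcases hc with hc | hc <;> simp [leftOf, hc.1, not_lt.mpr hc.2.le]
    have hcancel : ∀ a b d e : ZMod 2, a + b + (b + d) + (d + e + 0) = a + e := by decide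
    rw [hcancel, hparity] at hsum
    exact one_ne_zero hsum
  · intro t ht htn
    rw [Finset.mem_range] at ht
    have hnot : ∀ s, 0 < s → s < k → (c, y + 1) ∉ R s := fun s hs0 hs h => by
      have := h0 s hs ((hR s hs.le).eq_of_mem hR0 h htopc); omega
    exact edgeSum_piece_upCross_eq_zero hX (hR t ht.le) (hR (t + 1) ht) hcX
      (fun h => h.elim (hnot t (by omega) ht) (hnot (t + 1) (by omega) (by omega)))
      (fun p hp => hp.elim (hle t ht.le p) (hle (t + 1) ht p)) (he t ht).1 (he t ht).2.1
      (by rw [Nat.mod_eq_of_lt (by omega)]; exact (he (t + 1) (by omega)).1) (he t ht).2.2.two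

theorem rowCompGraph_isAcyclic {i j : ℕ} (hij : (i = 1 ∧ j = 2) ∨ (i = 2 ∧ j = 1)) {X : Set Pt}
    (hX : X.Finite) (hXc : Conn j Xᶜ) : (rowCompGraph i X).IsAcyclic := by
  intro v c hc
  obtain ⟨m, hm, hmax⟩ := c.support.toFinset.exists_max_image (fun r => r.2.choose)
    ⟨v, by simp⟩
  rw [List.mem_toFinset] at hm
  set c' := c.rotate m hm
  have hc' : c'.IsCycle := hc.rotate hm
  have hk := hc'.three_le_length
  refine false_of_rowComp_cycle hij hX hXc hk (R := fun t => (c'.getVert t).1)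
    (fun t _ => (c'.getVert t).2) (by simp)
    (fun t ht => (rowCompGraph_adj.mp (c'.adj_getVert_succ ht)).2) (fun t ht h => ?_) ?_ ?_
  · have := (hc'.getVert_endpoint_iff ht.le).mp (Subtype.ext (h.trans (by simp)))
    omega
  · exact fun h => hc'.snd_ne_penultimate (Subtype.ext h)
  · intro t _ p hp q hq
    have hmem : c'.getVert t ∈ c.support :=
      (c.mem_support_rotate_iff m hm).mp (c'.getVert_mem_support t)
    rw [(c'.getVert t).2.snd_eq_choose hp, (c'.getVert 0).2.snd_eq_choose hq]
    simpa using hmax _ (List.mem_toFinset.mpr hmem)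

/-! ### Deformation steps -/

theorem contractible_of_subsingleton {i : ℕ} {X : Set Pt} (hX : X.Subsingleton) (hne : X.Nonempty) :
    Contractible i (subAdj i X) := by
  obtain ⟨x₀, hx₀⟩ := hne
  refine ⟨⟨x₀, hx₀⟩, 0, fun x _ => x, fun _ => rfl, fun x => Subtype.ext (hX x.2 hx₀), ?_⟩
  intro x y _ _ _ _ _
  show cAdj i x y
  rw [hX x.2 y.2]
  exact cAdj_refl i y

section prodAdj

variable {i : ℕ} {α β : Type} {κ : α → α → Prop} {δ : β → β → Prop}

theorem prodAdj.natAdj_snd {p q : α × ℕ} (h : prodAdj i κ p q) : natAdj p.2 q.2 := by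
  unfold prodAdj at h
  split_ifs at h
  · obtain ⟨-, h⟩ | ⟨-, h⟩ := h
    exacts [.inl h, h]
  · exact h.2

theorem prodAdj.adj_or_eq {p q : α × ℕ} (h : prodAdj i κ p q) : κ p.1 q.1 ∨ p.1 = q.1 := by
  unfold prodAdj at h
  split_ifs at h
  · exact h.imp And.left And.left
  · exact .inl h.1

theorem prodAdj.symm (hκ : ∀ a b, κ a b → κ b a) {p q : α × ℕ} (h : prodAdj i κ p q) :
    prodAdj i κ q p := by
  unfold prodAdj natAdj at *
  split_ifs at *
  · exact h.imp (fun h => ⟨hκ _ _ h.1, h.2.symm⟩) fun h => ⟨h.1.symm, by omega⟩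
  · exact ⟨hκ _ _ h.1, by omega⟩

theorem prodAdj.map_pred {f : α → β} (hf : ∀ a b, κ a b → δ (f a) (f b)) {x y : α} {s t : ℕ}
    (h : prodAdj i κ (x, s + 1) (y, t + 1)) : prodAdj i δ (f x, s) (f y, t) := by
  unfold prodAdj natAdj at *
  split_ifs at *
  · exact h.imp (fun h => ⟨hf _ _ h.1, by simpa using h.2⟩) fun h => ⟨congrArg f h.1, by omega⟩
  · exact ⟨hf _ _ h.1, by omega⟩

end prodAdj

structure IsDeformStep (i j : ℕ) (X X' : Set Pt) (r : Pt → Pt) : Prop where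
  subset : X' ⊆ X
  mapsTo : Set.MapsTo r X X'
  fixed : ∀ p ∈ X', r p = p
  cont : ∀ p ∈ X, ∀ q ∈ X, cAdj i p q → cAdj i (r p) (r q)
  adj_self : ∀ p ∈ X, cAdj i p (r p)
  adj_cross : i ≠ 1 → ∀ p ∈ X, ∀ q ∈ X, cAdj i p q → cAdj i p (r q)
  escape : ∀ p ∈ X, p ∉ X' → ∃ w ∉ X, cAdj j p w

namespace IsDeformStep

variable {i j : ℕ} {X X' : Set Pt} {r : Pt → Pt}

theorem conn (h : IsDeformStep i j X X' r) (hconn : Conn i X) : Conn i X' := by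
  intro x hx y hy
  have := (hconn x (h.subset hx) y (h.subset hy)).map h.mapsTo h.cont
  rwa [h.fixed x hx, h.fixed y hy] at this

theorem conn_compl (h : IsDeformStep i j X X' r) (hXc : Conn j Xᶜ) : Conn j X'ᶜ := by
  have hsub : Xᶜ ⊆ X'ᶜ := Set.compl_subset_compl.mpr h.subset
  have reach : ∀ a ∈ X'ᶜ, ∃ w ∈ Xᶜ, ChainIn j X'ᶜ a w := by
    intro a ha
    by_cases haX : a ∈ X
    · obtain ⟨w, hw, haw⟩ := h.escape a haX ha
      exact ⟨w, hw, .single ha (hsub hw) haw⟩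
    · exact ⟨a, haX, .refl ha⟩
  intro a ha b hb
  obtain ⟨w, hw, haw⟩ := reach a ha
  obtain ⟨w', hw', hbw'⟩ := reach b hb
  exact (haw.trans ((hXc w hw w' hw').mono hsub)).trans hbw'.symm

/-- First move every point `x` to `r x`, then follow a contraction of `X'`. -/
theorem contractible (h : IsDeformStep i j X X' r) (h' : Contractible i (subAdj i X')) :
    Contractible i (subAdj i X) := by
  obtain ⟨x₀, m, H, hH0, hHm, hH⟩ := h'
  let ρ : X → X' := fun x => ⟨r x, h.mapsTo x.2⟩
  let F : X → ℕ → X := fun x t => match t with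
    | 0 => x
    | t + 1 => ⟨H (ρ x) t, h.subset (H (ρ x) t).2⟩
  have hF1 : ∀ x, (F x 1 : Pt) = r x := fun x => congrArg Subtype.val (hH0 (ρ x))
  have hF01 : ∀ x y : X, prodAdj i (subAdj i X) (x, 0) (y, 1) → cAdj i x (F y 1) := by
    intro x y hxy
    rw [hF1]
    unfold prodAdj at hxy
    split_ifs at hxy with hi
    · obtain ⟨-, h01⟩ | ⟨rfl, -⟩ := hxy
      · exact absurd h01 (by simp)
      · exact h.adj_self _ x.2
    · exact h.adj_cross hi _ x.2 _ y.2 hxy.1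
  refine ⟨⟨x₀, h.subset x₀.2⟩, m + 1, F, fun _ => rfl, fun x => Subtype.ext ?_, ?_⟩
  · show ((H (ρ x) m : X') : Pt) = x₀
    rw [hHm]
  intro x y s t hs ht hxy
  have hst : natAdj s t := hxy.natAdj_snd
  unfold natAdj at hst
  show cAdj i (F x s) (F y t)
  match s, t with
  | 0, 0 =>
    rcases hxy.adj_or_eq with hxy | hxy
    · exact hxy
    · obtain rfl : x = y := hxy
      exact cAdj_refl i _
  | 0, t + 1 =>
    obtain rfl : t = 0 := by omega
    exact hF01 x y hxy
  | s + 1, 0 =>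
    obtain rfl : s = 0 := by omega
    exact (hF01 y x (hxy.symm fun _ _ h => cAdj.symm h)).symm
  | s + 1, t + 1 =>
    exact hH (ρ x) (ρ y) s t (by omega) (by omega)
      (prodAdj.map_pred (f := ρ) (fun a b hab => h.cont _ a.2 _ b.2 hab) hxy)

end IsDeformStep

theorem isDeformStep_sdiff_singleton {i j : ℕ} {X : Set Pt} {p q : Pt} (hp : p ∈ X) (hq : q ∈ X)
    (hqp : q ≠ p) (hpq : cAdj i p q) (hsimple : ∀ z ∈ X, z ≠ p → cAdj i z p → cAdj i z q)
    (hesc : ∃ w ∉ X, cAdj j p w) :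
    IsDeformStep i j X (X \ {p}) fun z => if z = p then q else z where
  subset := Set.sdiff_subset
  mapsTo z hz := by
    dsimp only
    split_ifs with h
    exacts [⟨hq, hqp⟩, ⟨hz, h⟩]
  fixed z hz := if_neg hz.2
  cont z hz w hw hzw := by
    split_ifs with h₁ h₂ h₂
    · exact cAdj_refl i q
    · exact (hsimple w hw h₂ (h₁ ▸ hzw.symm)).symm
    · exact hsimple z hz h₁ (h₂ ▸ hzw)
    · exact hzw
  adj_self z hz := by
    split_ifs with h
    exacts [h ▸ hpq, cAdj_refl i z]
  adj_cross _ z hz w hw hzw := by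
    split_ifs with h
    · by_cases hz' : z = p
      exacts [hz' ▸ hpq, hsimple z hz hz' (h ▸ hzw)]
    · exact hzw
  escape z _ hz := by
    obtain rfl : z = p := by_contra fun h => hz ⟨‹_›, h⟩
    exact hesc

theorem isDeformStep_pushRowSeg {j : ℕ} {X : Set Pt} {k a b ε : ℤ} (hε : ε = 1 ∨ ε = -1)
    (hB : ∀ x, a ≤ x → x ≤ b → (x, k + ε) ∈ X)
    (hloc : ∀ p ∈ rowSeg k a b, ∀ z ∈ X, cAdj 1 p z → z ∈ rowSeg k a b ∨ z.2 = k + ε) :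
    IsDeformStep 1 j X (X \ rowSeg k a b)
      fun z => if z.2 = k ∧ a ≤ z.1 ∧ z.1 ≤ b then (z.1, k + ε) else z where
  subset := Set.sdiff_subset
  mapsTo z hz := by
    dsimp only
    split_ifs with h
    · exact ⟨hB z.1 h.2.1 h.2.2, fun h' => by simp only [mem_rowSeg] at h'; omega⟩
    · exact ⟨hz, h⟩
  fixed z hz := if_neg hz.2
  cont z hz w hw hzw := by
    have hzw' := hzw
    rw [cAdj_one_iff] at hzw'
    split_ifs with h₁ h₂ h₂
    · rw [cAdj_one_iff]; dsimp only; omega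
    · rcases hloc z h₁ w hw hzw with h | h
      · exact absurd h h₂
      · rw [cAdj_one_iff]; dsimp only; omega
    · rcases hloc w h₂ z hz hzw.symm with h | h
      · exact absurd h h₁
      · rw [cAdj_one_iff]; dsimp only; omega
    · exact hzw
  adj_self z hz := by
    split_ifs with h
    · rw [cAdj_one_iff]; dsimp only; omega
    · exact cAdj_refl 1 z
  adj_cross h := absurd rfl h
  escape z hz hz' := by
    have hzT : z ∈ rowSeg k a b := by_contra fun h => hz' ⟨hz, h⟩
    refine ⟨(z.1, k - ε), fun hw => ?_, by rw [cAdj_iff]; simp only [mem_rowSeg] at hzT; omega⟩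
    have hadj : cAdj 1 z (z.1, k - ε) := by rw [cAdj_one_iff]; simp only [mem_rowSeg] at hzT; omega
    rcases hloc z hzT _ hw hadj with h | h <;> simp only [mem_rowSeg] at h hzT <;> omega

theorem exists_deformStep_of_leaf_point {i j : ℕ} {X N : Set Pt} {k a b ε : ℤ}
    (hε : ε = 1 ∨ ε = -1) (hNrow : ∀ w ∈ N, w.2 = k + ε)
    (hloc : ∀ p ∈ rowSeg k a b, ∀ z ∈ X, cAdj i p z → z ∈ rowSeg k a b ∨ z ∈ N)
    {p q : Pt} (hpT : p ∈ rowSeg k a b) (hp : p ∈ X) (hq : q ∈ X) (hqp : q ≠ p) (hpq : cAdj i p q)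
    (hsimple : ∀ z ∈ rowSeg k a b ∪ N, z ≠ p → cAdj i z p → cAdj i z q) :
    ∃ X' ⊂ X, ∃ r, IsDeformStep i j X X' r := by
  refine ⟨_, Set.sdiff_singleton_ssubset.mpr hp, _, isDeformStep_sdiff_singleton hp hq hqp hpq
    (fun z hz hzp hzq => hsimple z ((hloc p hpT z hz hzq.symm).elim .inl .inr) hzp hzq)
    ⟨(p.1, k - ε), fun hw => ?_, ?_⟩⟩
  · have hadj : cAdj i p (p.1, k - ε) := by rw [cAdj_iff]; simp only [mem_rowSeg] at hpT; omega
    rcases hloc p hpT _ hw hadj with h | h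
    · simp only [mem_rowSeg] at h; omega
    · have := hNrow _ h; dsimp only at this; omega
  · rw [cAdj_iff]; simp only [mem_rowSeg] at hpT; omega

theorem exists_deformStep_of_leaf_one {j : ℕ} {X : Set Pt} {k a b ε e f : ℤ}
    (hε : ε = 1 ∨ ε = -1) (hab : a ≤ b) (hT : rowSeg k a b ⊆ X) (hN : rowSeg (k + ε) e f ⊆ X)
    (hloc : ∀ p ∈ rowSeg k a b, ∀ z ∈ X, cAdj 1 p z → z ∈ rowSeg k a b ∨ z ∈ rowSeg (k + ε) e f)
    (hnt : a < b ∨ e ≤ b ∧ a ≤ f) : ∃ X' ⊂ X, ∃ r, IsDeformStep 1 j X X' r := by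
  have hpoint := fun {p q : Pt} => exists_deformStep_of_leaf_point (j := j) hε
    (fun w hw => hw.1) hloc (p := p) (q := q)
  by_cases hpush : e ≤ a ∧ b ≤ f
  · have haT : ((a, k) : Pt) ∈ rowSeg k a b := ⟨rfl, le_rfl, hab⟩
    exact ⟨_, ⟨Set.sdiff_subset, fun h => (h (hT haT)).2 haT⟩, _, isDeformStep_pushRowSeg hε
      (fun x h₁ h₂ => hN ⟨rfl, by omega, by omega⟩)
      fun p hp z hz hpz => (hloc p hp z hz hpz).imp id And.left⟩
  by_cases hb : e ≤ b ∧ b ≤ f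
  · exact hpoint (p := (a, k)) (q := (a + 1, k)) ⟨rfl, le_rfl, hab⟩ (hT ⟨rfl, le_rfl, hab⟩)
      (hT ⟨rfl, by omega, by omega⟩) (by simp) (by rw [cAdj_one_iff]; omega)
      (by rintro z (hz | hz) hzp hzq <;>
        simp only [mem_rowSeg, cAdj_one_iff, ne_eq, Prod.ext_iff] at * <;> omega)
  · exact hpoint (p := (b, k)) (q := (b - 1, k)) ⟨rfl, hab, le_rfl⟩ (hT ⟨rfl, hab, le_rfl⟩)
      (hT ⟨rfl, by omega, by omega⟩) (by simp) (by rw [cAdj_one_iff]; omega)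
      (by rintro z (hz | hz) hzp hzq <;>
        simp only [mem_rowSeg, cAdj_one_iff, ne_eq, Prod.ext_iff] at * <;> omega)

theorem exists_deformStep_of_leaf_two {j : ℕ} {X : Set Pt} {k a b ε e f : ℤ}
    (hε : ε = 1 ∨ ε = -1) (hab : a ≤ b) (hT : rowSeg k a b ⊆ X) (hN : rowSeg (k + ε) e f ⊆ X)
    (hloc : ∀ p ∈ rowSeg k a b, ∀ z ∈ X, cAdj 2 p z → z ∈ rowSeg k a b ∨ z ∈ rowSeg (k + ε) e f)
    (hnt : a < b ∨ e ≤ f ∧ e ≤ b + 1 ∧ a - 1 ≤ f) : ∃ X' ⊂ X, ∃ r, IsDeformStep 2 j X X' r := by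
  have hpoint := fun {p q : Pt} => exists_deformStep_of_leaf_point (j := j) hε
    (fun w hw => hw.1) hloc (p := p) (q := q)
  have haT : ((a, k) : Pt) ∈ rowSeg k a b := ⟨rfl, le_rfl, hab⟩
  by_cases ha : e ≤ a ∧ a ≤ f
  · exact hpoint (q := (a, k + ε)) haT (hT haT) (hN ⟨rfl, ha⟩) (by simp; omega)
      (by rw [cAdj_two_iff]; omega)
      (by rintro z (hz | hz) hzp hzq <;>
        simp only [mem_rowSeg, cAdj_two_iff, ne_eq, Prod.ext_iff] at * <;> omega)
  by_cases ha' : e ≤ a - 1 ∧ a - 1 ≤ f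
  · -- `N` ends at the column `a - 1`
    rcases eq_or_lt_of_le hab with rfl | hab'
    · exact hpoint (q := (a - 1, k + ε)) haT (hT haT) (hN ⟨rfl, ha'⟩) (by simp)
        (by rw [cAdj_two_iff]; omega)
        (by rintro z (hz | hz) hzp hzq <;>
          simp only [mem_rowSeg, cAdj_two_iff, ne_eq, Prod.ext_iff] at * <;> omega)
    · exact hpoint (p := (b, k)) (q := (b - 1, k)) ⟨rfl, hab, le_rfl⟩ (hT ⟨rfl, hab, le_rfl⟩)
        (hT ⟨rfl, by omega, by omega⟩) (by simp) (by rw [cAdj_two_iff]; omega)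
        (by rintro z (hz | hz) hzp hzq <;>
          simp only [mem_rowSeg, cAdj_two_iff, ne_eq, Prod.ext_iff] at * <;> omega)
  rcases eq_or_lt_of_le hab with rfl | hab'
  · exact hpoint (q := (a + 1, k + ε)) haT (hT haT) (hN ⟨rfl, by omega, by omega⟩) (by simp)
      (by rw [cAdj_two_iff]; omega)
      (by rintro z (hz | hz) hzp hzq <;>
        simp only [mem_rowSeg, cAdj_two_iff, ne_eq, Prod.ext_iff] at * <;> omega)
  · exact hpoint (q := (a + 1, k)) haT (hT haT) (hT ⟨rfl, by omega, by omega⟩) (by simp)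
      (by rw [cAdj_two_iff]; omega)
      (by rintro z (hz | hz) hzp hzq <;>
        simp only [mem_rowSeg, cAdj_two_iff, ne_eq, Prod.ext_iff] at * <;> omega)

theorem exists_deformStep_of_leaf {i j : ℕ} (hij : (i = 1 ∧ j = 2) ∨ (i = 2 ∧ j = 1))
    {X : Set Pt} {k a b ε e f : ℤ} (hε : ε = 1 ∨ ε = -1) (hab : a ≤ b) (hT : rowSeg k a b ⊆ X)
    (hN : rowSeg (k + ε) e f ⊆ X)
    (hloc : ∀ p ∈ rowSeg k a b, ∀ z ∈ X, cAdj i p z → z ∈ rowSeg k a b ∨ z ∈ rowSeg (k + ε) e f)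
    (hnt : a < b ∨ ∃ z ∈ rowSeg k a b, ∃ w ∈ rowSeg (k + ε) e f, cAdj i z w) :
    ∃ X' ⊂ X, ∃ r, IsDeformStep i j X X' r := by
  rcases hij with ⟨rfl, rfl⟩ | ⟨rfl, rfl⟩
  · refine exists_deformStep_of_leaf_one hε hab hT hN hloc ?_
    obtain h | ⟨z, hz, w, hw, hzw⟩ := hnt
    · exact .inl h
    · simp only [mem_rowSeg, cAdj_one_iff] at hz hw hzw; omega
  · refine exists_deformStep_of_leaf_two hε hab hT hN hloc ?_
    obtain h | ⟨z, hz, w, hw, hzw⟩ := hnt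
    · exact .inl h
    · simp only [mem_rowSeg, cAdj_two_iff] at hz hw hzw; omega

theorem exists_deformStep {i j : ℕ} (hij : (i = 1 ∧ j = 2) ∨ (i = 2 ∧ j = 1)) {X : Set Pt}
    (hX : X.Finite) (hne : X.Nonempty) (hnsub : ¬X.Subsingleton) (hconn : Conn i X)
    (hXc : Conn j Xᶜ) : ∃ X' ⊂ X, ∃ r, IsDeformStep i j X X' r := by
  by_cases hnt : Nontrivial (RowComp i X)
  · obtain ⟨T, N, hTN, huniq⟩ := exists_leaf hX hne hconn (rowCompGraph_isAcyclic hij hX hXc) hnt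
    obtain ⟨k, a, b, hab, hT, hTX, -⟩ := T.2.exists_eq_rowSeg hX
    obtain ⟨k', e, f, -, hN, hNX, -⟩ := N.2.exists_eq_rowSeg hX
    obtain ⟨hTN', z, hz, w, hw, hzw⟩ := rowCompGraph_adj.mp hTN
    have hε : k' - k = 1 ∨ k' - k = -1 := by
      have hne := T.2.snd_ne_of_cAdj N.2 (fun h => hTN' (Subtype.ext h)) hz hw hzw
      rw [hT] at hz; rw [hN] at hw
      rw [cAdj_iff] at hzw; simp only [mem_rowSeg] at hz hw; omega
    rw [show k' = k + (k' - k) by ring] at hN hNX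
    refine exists_deformStep_of_leaf hij hε hab hTX hNX (fun p hp y hy hpy => ?_)
      (.inr ⟨z, hT ▸ hz, w, hN ▸ hw, hzw⟩)
    by_cases hyT : y ∈ T.1
    · exact .inl (hT ▸ hyT)
    · refine .inr (hN ▸ ?_)
      have hC := huniq ⟨_, isRowComp_rowCompOf hy⟩ (rowCompGraph_adj.mpr
        ⟨fun h => hyT (h ▸ mem_rowCompOf_self hy), p, hT ▸ hp, y, mem_rowCompOf_self hy, hpy⟩)
      exact hC ▸ mem_rowCompOf_self hy
  · -- `X` is a single row segment
    rw [not_nontrivial_iff_subsingleton] at hnt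
    obtain ⟨x₀, hx₀⟩ := hne
    obtain ⟨k, a, b, hab, hT, hTX, -⟩ := (isRowComp_rowCompOf (i := i) hx₀).exists_eq_rowSeg hX
    have hXT : X ⊆ rowSeg k a b := fun y hy => by
      have : rowCompOf i X y = rowCompOf i X x₀ := congrArg Subtype.val
        (Subsingleton.elim (α := RowComp i X)
          ⟨_, isRowComp_rowCompOf hy⟩ ⟨_, isRowComp_rowCompOf hx₀⟩)
      exact hT ▸ this ▸ mem_rowCompOf_self hy
    have hab' : a < b := by
      by_contra h
      refine hnsub fun y hy y' hy' => ?_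
      have := hXT hy; have := hXT hy'; simp only [mem_rowSeg] at *
      exact Prod.ext (by omega) (by omega)
    exact exists_deformStep_of_leaf hij (ε := 1) (e := 1) (f := 0) (.inl rfl) hab hTX
      (fun _ h => by simp only [mem_rowSeg] at h; omega) (fun _ _ y hy _ => .inl (hXT hy))
      (.inl hab')

/-! ### Contractibility -/

theorem contractible_of_conn {i j : ℕ} (hij : (i = 1 ∧ j = 2) ∨ (i = 2 ∧ j = 1)) {X : Set Pt}
    (hX : X.Finite) (hne : X.Nonempty) (hconn : Conn i X) (hXc : Conn j Xᶜ) :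
    Contractible i (subAdj i X) := by
  induction h : X.ncard using Nat.strong_induction_on generalizing X with
  | _ n ih =>
    by_cases hsub : X.Subsingleton
    · exact contractible_of_subsingleton hsub hne
    obtain ⟨X', hX', r, hr⟩ := exists_deformStep hij hX hne hsub hconn hXc
    exact hr.contractible (ih _ (h ▸ Set.ncard_lt_ncard hX' hX) (hX.subset hX'.subset)
      (hne.image r |>.mono (Set.image_subset_iff.mpr hr.mapsTo)) (hr.conn hconn)
      (hr.conn_compl hXc) rfl)

/-- a nonempty `c_i`-connected digital picture with no hole is
`i`-contractible. -/
theorem stmt10 (i j : ℕ) (hij : (i = 1 ∧ j = 2) ∨ (i = 2 ∧ j = 1))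
    (X : Set Pt) (hX : X.Finite) (hne : X.Nonempty)
    (hconn : Conn i X) (hnohole : NoHole j X) :
    Contractible i (subAdj i X) :=
  contractible_of_conn hij hX hne hconn (conn_compl_of_noHole hX hnohole)
end

section
/- Let X ⊆ ℤ² be a finite set, and define the nested sequence S₀ = X, S_{2k+1} = H_r(S_{2k}), S_{2k+2} = H_c(S_{2k+1}). Then the sequence (S_k) stabilizes (there is K with S_k = S_K for all k ≥ K), and its stable value H(X) = ⋃_k S_k equals the rc-convex hull H_rc(X). -/
lemma subset_Hr (X : Set Pt) : X ⊆ Hr X := fun p hp =>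
  Set.mem_sInter.mpr fun _ hS => hS.2 hp

lemma subset_Hc (X : Set Pt) : X ⊆ Hc X := fun p hp =>
  Set.mem_sInter.mpr fun _ hS => hS.2 hp

lemma rowConvex_Hr (X : Set Pt) : RowConvex (Hr X) := by
  intro a b c k ha hc hab hbc
  simp only [Hr, Hc, Hrc, Set.mem_sInter] at ha hc ⊢
  intro T hT
  exact hT.1 a b c k (ha T hT) (hc T hT) hab hbc

lemma colConvex_Hc (X : Set Pt) : ColConvex (Hc X) := by
  intro a b c k ha hc hab hbc
  simp only [Hr, Hc, Hrc, Set.mem_sInter] at ha hc ⊢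
  intro T hT
  exact hT.1 a b c k (ha T hT) (hc T hT) hab hbc

lemma Hr_subset {X T : Set Pt} (hT : RowConvex T) (hXT : X ⊆ T) : Hr X ⊆ T :=
  fun _ hp => Set.mem_sInter.mp hp T ⟨hT, hXT⟩

lemma Hc_subset {X T : Set Pt} (hT : ColConvex T) (hXT : X ⊆ T) : Hc X ⊆ T :=
  fun _ hp => Set.mem_sInter.mp hp T ⟨hT, hXT⟩

lemma rowConvex_Hrc (X : Set Pt) : RowConvex (Hrc X) := by
  intro a b c k ha hc hab hbc
  simp only [Hr, Hc, Hrc, Set.mem_sInter] at ha hc ⊢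
  intro T hT
  exact hT.1.1 a b c k (ha T hT) (hc T hT) hab hbc

lemma colConvex_Hrc (X : Set Pt) : ColConvex (Hrc X) := by
  intro a b c k ha hc hab hbc
  simp only [Hr, Hc, Hrc, Set.mem_sInter] at ha hc ⊢
  intro T hT
  exact hT.1.2 a b c k (ha T hT) (hc T hT) hab hbc

lemma subset_Hrc (X : Set Pt) : X ⊆ Hrc X := fun p hp =>
  Set.mem_sInter.mpr fun _ hS => hS.2 hp

lemma Hrc_subset {X T : Set Pt} (hr : RowConvex T) (hc : ColConvex T) (hXT : X ⊆ T) :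
    Hrc X ⊆ T := fun _ hp => Set.mem_sInter.mp hp T ⟨⟨hr, hc⟩, hXT⟩

lemma exists_box (X : Set Pt) (hX : X.Finite) :
    ∃ T : Set Pt, T.Finite ∧ RowConvex T ∧ ColConvex T ∧ X ⊆ T := by
  obtain ⟨a1, ha1⟩ := (hX.image Prod.fst).bddBelow
  obtain ⟨b1, hb1⟩ := (hX.image Prod.fst).bddAbove
  obtain ⟨a2, ha2⟩ := (hX.image Prod.snd).bddBelow
  obtain ⟨b2, hb2⟩ := (hX.image Prod.snd).bddAbove
  refine ⟨Set.Icc a1 b1 ×ˢ Set.Icc a2 b2,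
    (Set.finite_Icc _ _).prod (Set.finite_Icc _ _), ?_, ?_, ?_⟩
  · intro a b c k ha hc hab hbc
    simp only [Set.mem_prod, Set.mem_Icc] at ha hc ⊢
    omega
  · intro a b c k ha hc hab hbc
    simp only [Set.mem_prod, Set.mem_Icc] at ha hc ⊢
    omega
  · intro p hp
    have h1 := ha1 ⟨p, hp, rfl⟩
    have h2 := hb1 ⟨p, hp, rfl⟩
    have h3 := ha2 ⟨p, hp, rfl⟩
    have h4 := hb2 ⟨p, hp, rfl⟩
    exact ⟨⟨h1, h2⟩, ⟨h3, h4⟩⟩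

/-- the nested sequence `X ⊆ H_r(X) ⊆ H_c(H_r(X)) ⊆ …` stabilizes, and
its stable value (the union of the sequence) equals the rc-convex hull `H_rc(X)`. -/
theorem stmt14 (X : Set Pt) (hX : X.Finite) (S : ℕ → Set Pt)
    (hS0 : S 0 = X)
    (hSsucc : ∀ n : ℕ, S (n + 1) = if Even n then Hr (S n) else Hc (S n)) :
    (∃ K : ℕ, ∀ k : ℕ, K ≤ k → S k = S K) ∧ (⋃ k : ℕ, S k) = Hrc X := by
  classical
  -- monotonicity
  have hstep : ∀ n, S n ⊆ S (n + 1) := by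
    intro n
    rw [hSsucc n]
    split
    · exact subset_Hr _
    · exact subset_Hc _
  have hmono : ∀ m n : ℕ, m ≤ n → S m ⊆ S n := by
    intro m n h
    induction n with
    | zero => simpa [Nat.le_zero.mp h]
    | succ n ih =>
      rcases Nat.lt_or_ge m (n + 1) with h' | h'
      · exact (ih (Nat.lt_succ_iff.mp h')).trans (hstep n)
      · have : m = n + 1 := le_antisymm h h'
        simp [this]
  -- every S n is inside any rc-convex superset of X
  have hsub : ∀ (T : Set Pt), RowConvex T → ColConvex T → X ⊆ T → ∀ n, S n ⊆ T := by
    intro T hr hc hXT n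
    induction n with
    | zero => simpa [hS0]
    | succ n ih =>
      rw [hSsucc n]
      split
      · exact Hr_subset hr ih
      · exact Hc_subset hc ih
  have hSHrc : ∀ n, S n ⊆ Hrc X :=
    hsub _ (rowConvex_Hrc X) (colConvex_Hrc X) (subset_Hrc X)
  -- Hrc X is finite
  obtain ⟨T, hTfin, hTr, hTc, hXT⟩ := exists_box X hX
  have hHrcFin : (Hrc X).Finite := hTfin.subset (Hrc_subset hTr hTc hXT)
  -- the union is finite
  have hUsub : (⋃ k, S k) ⊆ Hrc X := Set.iUnion_subset hSHrc
  have hUfin : (⋃ k, S k).Finite := hHrcFin.subset hUsub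
  -- find K with U ⊆ S K
  have hexK : ∃ K, (⋃ k, S k) ⊆ S K := by
    set F := hUfin.toFinset with hF
    choose f hf using fun a (ha : a ∈ ⋃ k, S k) => Set.mem_iUnion.mp ha
    refine ⟨F.sup (fun a => if h : a ∈ ⋃ k, S k then f a h else 0), ?_⟩
    intro a ha
    have hle : f a ha ≤ F.sup (fun a => if h : a ∈ ⋃ k, S k then f a h else 0) := by
      have hmem : a ∈ F := hUfin.mem_toFinset.mpr ha
      have := Finset.le_sup (f := fun a => if h : a ∈ ⋃ k, S k then f a h else 0) hmem
      simpa [ha] using this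
    exact hmono _ _ hle (hf a ha)
  obtain ⟨K, hK⟩ := hexK
  have hSKU : S K = ⋃ k, S k :=
    le_antisymm (Set.subset_iUnion S K) hK
  have hstab : ∀ k, K ≤ k → S k = S K := by
    intro k hk
    refine le_antisymm ?_ (hmono _ _ hk)
    rw [hSKU]
    exact Set.subset_iUnion S k
  refine ⟨⟨K, hstab⟩, ?_⟩
  -- S K is rc-convex
  have heq : ∀ n, K ≤ n → S n = S K := hstab
  have hHrSK : Hr (S K) = S K := by
    rcases Nat.even_or_odd K with he | ho
    · have := hSsucc K
      rw [if_pos he] at this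
      rw [← this, heq (K+1) (Nat.le_succ K)]
    · have he : Even (K + 1) := by
        rcases ho with ⟨m, hm⟩; exact ⟨m + 1, by omega⟩
      have := hSsucc (K + 1)
      rw [if_pos he, heq (K+1) (Nat.le_succ K)] at this
      rw [← this, heq (K+2) (by omega)]
  have hHcSK : Hc (S K) = S K := by
    rcases Nat.even_or_odd K with he | ho
    · have ho1 : ¬ Even (K + 1) := by
        simp [Nat.even_add_one, he]
      have := hSsucc (K + 1)
      rw [if_neg ho1, heq (K+1) (Nat.le_succ K)] at this
      rw [← this, heq (K+2) (by omega)]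
    · have := hSsucc K
      rw [if_neg (Nat.not_even_iff_odd.mpr ho)] at this
      rw [← this, heq (K+1) (Nat.le_succ K)]
  have hrow : RowConvex (S K) := hHrSK ▸ rowConvex_Hr (S K)
  have hcol : ColConvex (S K) := hHcSK ▸ colConvex_Hc (S K)
  have hXSK : X ⊆ S K := hS0 ▸ hmono 0 K (Nat.zero_le K)
  refine le_antisymm hUsub ?_
  rw [← hSKU]
  exact Hrc_subset hrow hcol hXSK
end

section
/- Let (X,κ) be a finite digital image and i ∈ {1,2}. Then X is i-reducible if and only if X is i-homotopy equivalent to a proper subset of itself (equipped with the induced adjacency). -/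
section Aux

variable {α' β' γ' : Type} {i : ℕ}

lemma prodAdj_mono {κ : α' → α' → Prop} {x y : α'} {s t s' t' : ℕ}
    (h : prodAdj i κ (x, s) (y, t)) (h2 : natAdj s' t') (h3 : s = t → s' = t') :
    prodAdj i κ (x, s') (y, t') := by
  unfold prodAdj at h ⊢
  by_cases h1 : i = 1
  · rw [if_pos h1] at h ⊢
    rcases h with ⟨hk, he⟩ | ⟨he, _⟩
    · exact Or.inl ⟨hk, h3 he⟩
    · exact Or.inr ⟨he, h2⟩
  · rw [if_neg h1] at h ⊢
    exact ⟨h.1, h2⟩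

lemma prodAdj_natAdj {κ : α' → α' → Prop} {x y : α'} {s t : ℕ}
    (h : prodAdj i κ (x, s) (y, t)) : natAdj s t := by
  unfold prodAdj at h
  by_cases h1 : i = 1
  · rw [if_pos h1] at h
    rcases h with ⟨_, he⟩ | ⟨_, hn⟩
    · exact Or.inl he
    · exact hn
  · rw [if_neg h1] at h
    exact h.2

lemma homotopic_refl {κ : α' → α' → Prop} {δ : β' → β' → Prop} {f : α' → β'}
    (hκ : Reflexive κ) (hf : DigCont κ δ f) : Homotopic i κ δ f f := by
  refine ⟨0, fun x _ => f x, fun _ => rfl, fun _ => rfl, ?_⟩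
  intro x y s t _ _ hadj
  unfold prodAdj at hadj
  by_cases h1 : i = 1
  · rw [if_pos h1] at hadj
    rcases hadj with ⟨hk, _⟩ | ⟨he, _⟩
    · exact hf x y hk
    · subst he; exact hf x x (hκ x)
  · rw [if_neg h1] at hadj
    exact hf x y hadj.1

lemma homotopic_comp {κ : α' → α' → Prop} {δ : β' → β' → Prop} {ε : γ' → γ' → Prop}
    {f g : α' → β'} {h : β' → γ'} (hh : DigCont δ ε h)
    (H : Homotopic i κ δ f g) : Homotopic i κ ε (h ∘ f) (h ∘ g) := by
  obtain ⟨m, H, h0, hm, hc⟩ := H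
  exact ⟨m, fun x t => h (H x t), fun x => by simp [h0 x],
    fun x => by simp [hm x], fun x y s t hs ht hadj => hh _ _ (hc x y s t hs ht hadj)⟩

lemma homotopic_trans {κ : α' → α' → Prop} {δ : β' → β' → Prop} {f g k : α' → β'}
    (H1 : Homotopic i κ δ f g) (H2 : Homotopic i κ δ g k) : Homotopic i κ δ f k := by
  obtain ⟨m, H, hH0, hHm, hHc⟩ := H1
  obtain ⟨m', K, hK0, hKm, hKc⟩ := H2
  refine ⟨m + m', fun x t => if t ≤ m then H x t else K x (t - m), fun x => by simp [hH0 x], ?_, ?_⟩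
  · intro x
    by_cases hc : m + m' ≤ m
    · have hm0 : m' = 0 := by omega
      subst hm0
      simp only [Nat.add_zero, if_pos le_rfl]
      rw [hHm x, ← hK0 x, hKm x]
    · simp only [if_neg hc]
      have : m + m' - m = m' := by omega
      rw [this, hKm x]
  · intro x y s t hs ht hadj
    have hnat : natAdj s t := prodAdj_natAdj hadj
    by_cases h1 : s ≤ m <;> by_cases h2 : t ≤ m
    · simpa [h1, h2] using hHc x y s t h1 h2 hadj
    · -- s ≤ m < t : s = m, t = m + 1
      have hs' : s = m ∧ t = m + 1 := by
        rcases hnat with h | h | h <;> omega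
      have hst : s ≠ t := by omega
      have hadj' : prodAdj i κ (x, 0) (y, 1) :=
        prodAdj_mono hadj (Or.inr (Or.inl rfl)) (fun h => absurd h hst)
      have := hKc x y 0 1 (Nat.zero_le _) (by omega) hadj'
      simp only [if_pos h1, if_neg h2]
      rw [hs'.1, hHm x, ← hK0 x]
      have ht1 : t - m = 1 := by omega
      rw [ht1]; exact this
    · -- t ≤ m < s : t = m, s = m + 1
      have hs' : t = m ∧ s = m + 1 := by
        rcases hnat with h | h | h <;> omega
      have hst : s ≠ t := by omega
      have hadj' : prodAdj i κ (x, 1) (y, 0) :=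
        prodAdj_mono hadj (Or.inr (Or.inr rfl)) (fun h => absurd h hst)
      have := hKc x y 1 0 (by omega) (Nat.zero_le _) hadj'
      simp only [if_neg h1, if_pos h2]
      rw [hs'.1, hHm y, ← hK0 y]
      have ht1 : s - m = 1 := by omega
      rw [ht1]; exact this
    · have hs2 : m < s := by omega
      have ht2 : m < t := by omega
      have hnat' : natAdj (s - m) (t - m) := by
        rcases hnat with h | h | h
        · exact Or.inl (by omega)
        · exact Or.inr (Or.inl (by omega))
        · exact Or.inr (Or.inr (by omega))
      have hadj' : prodAdj i κ (x, s - m) (y, t - m) :=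
        prodAdj_mono hadj hnat' (fun h => by omega)
      simpa [h1, h2] using hKc x y (s - m) (t - m) (by omega) (by omega) hadj'

lemma digCont_iterate {κ : α' → α' → Prop} {h : α' → α'} (hc : DigCont κ κ h) (n : ℕ) :
    DigCont κ κ (h^[n]) := by
  induction n with
  | zero => exact fun x y hxy => hxy
  | succ n ih =>
      intro x y hxy
      rw [Function.iterate_succ']
      exact hc _ _ (ih x y hxy)

lemma homotopic_iterate {κ : α' → α' → Prop} (hκ : Reflexive κ) {h : α' → α'}
    (hc : DigCont κ κ h) (H : Homotopic i κ κ h id) (n : ℕ) :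
    Homotopic i κ κ (h^[n]) id := by
  induction n with
  | zero => exact homotopic_refl hκ (fun x y hxy => hxy)
  | succ n ih =>
      have h1 : Homotopic i κ κ (h^[n] ∘ h) (h^[n] ∘ id) :=
        homotopic_comp (digCont_iterate hc n) H
      rw [Function.comp_id] at h1
      rw [Function.iterate_succ]
      exact homotopic_trans h1 ih

lemma exists_idem_iterate [Finite α'] (h : α' → α') :
    ∃ n, 1 ≤ n ∧ h^[n] ∘ h^[n] = h^[n] := by
  obtain ⟨a, b, hne, heq⟩ := Finite.exists_ne_map_eq_of_infinite (fun k : ℕ => h^[k + 1])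
  wlog hab : a < b generalizing a b
  · exact this b a hne.symm heq.symm (by omega)
  set q := a + 1 with hq
  set p := b - a with hp
  have hp1 : 1 ≤ p := by omega
  have hqp : h^[q + p] = h^[q] := by
    have : q + p = b + 1 := by omega
    rw [this]; exact heq.symm
  have step : ∀ m, q ≤ m → h^[m + p] = h^[m] := by
    intro m hm
    have e1 : m + p = (m - q) + (q + p) := by omega
    have e2 : m = (m - q) + q := by omega
    rw [e1, Function.iterate_add, hqp, ← Function.iterate_add, ← e2]
  have claim : ∀ k m, q ≤ m → h^[m + k * p] = h^[m] := by
    intro k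
    induction k with
    | zero => intro m _; simp
    | succ k ih =>
        intro m hm
        have e1 : m + (k + 1) * p = (m + p) + k * p := by ring
        rw [e1, ih (m + p) (by omega), step m hm]
  refine ⟨q * p, by nlinarith, ?_⟩
  rw [← Function.iterate_add]
  exact claim q (q * p) (by nlinarith)

end Aux

/-- a finite digital image is `i`-reducible iff it is `i`-homotopy
equivalent to a proper subset of itself (with the induced adjacency). -/
theorem stmt17 {α : Type} [Finite α] (κ : α → α → Prop)
    (hrefl : Reflexive κ) (hsymm : Symmetric κ) (i : ℕ) (hi : i = 1 ∨ i = 2) :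
    Reducible i κ ↔
      ∃ Y : Set α, Y ≠ Set.univ ∧ HtpyEquiv i κ (fun a b : Y => κ a.1 b.1) := by
  constructor
  · rintro ⟨β, δ, hδr, hδs, hβfin, hcard, f, g, hf, hg, Hgf, Hfg⟩
    set h : α → α := g ∘ f with hh
    have hcont : DigCont κ κ h := fun x y hxy => hg _ _ (hf x y hxy)
    obtain ⟨n, hn1, hidem⟩ := exists_idem_iterate h
    set e : α → α := h^[n] with he
    have hecont : DigCont κ κ e := digCont_iterate hcont n
    have heid : Homotopic i κ κ e id := homotopic_iterate hrefl hcont Hgf n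
    refine ⟨Set.range e, ?_, ?_⟩
    · intro hY
      have hesurj : Function.Surjective e := Set.range_eq_univ.mp hY
      obtain ⟨n', hn'⟩ : ∃ n', n = n' + 1 := ⟨n - 1, by omega⟩
      have hcs : Function.Surjective (h ∘ h^[n']) := by
        have he2 : h ∘ h^[n'] = h^[n] := by rw [hn', Function.iterate_succ']
        rw [he2]; exact hesurj
      have hhsurj : Function.Surjective h := Function.Surjective.of_comp hcs
      have hgsurj : Function.Surjective g := Function.Surjective.of_comp hhsurj
      have := Nat.card_le_card_of_surjective g hgsurj
      omega
    · refine ⟨fun a => ⟨e a, ⟨a, rfl⟩⟩, fun y => y.1, fun x y hxy => hecont x y hxy,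
        fun x y hxy => hxy, ?_, ?_⟩
      · have hcomp : (fun (y : Set.range e) => y.1) ∘
            (fun a => (⟨e a, ⟨a, rfl⟩⟩ : Set.range e)) = e := rfl
        rw [hcomp]; exact heid
      · have hfix : ∀ y : Set.range e, e y.1 = y.1 := by
          rintro ⟨_, b, rfl⟩
          exact congrFun hidem b
        have hcomp : (fun a => (⟨e a, ⟨a, rfl⟩⟩ : Set.range e)) ∘
            (fun (y : Set.range e) => y.1) = id := by
          funext y; exact Subtype.ext (hfix y)
        rw [hcomp]
        exact homotopic_refl (fun y => hrefl y.1) (fun x y hxy => hxy)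
  · rintro ⟨Y, hY, hE⟩
    refine ⟨Y, fun a b => κ a.1 b.1, fun a => hrefl a.1, fun a b hab => hsymm hab,
      inferInstance, ?_, hE⟩
    have h1 : Nat.card Y = Y.ncard := Nat.card_coe_set_eq Y
    have h2 : Nat.card α = (Set.univ : Set α).ncard := (Set.ncard_univ α).symm
    rw [h1, h2]
    exact Set.ncard_lt_ncard (Set.ssubset_univ_iff.mpr hY) Set.finite_univ
end
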